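/- arXiv:1405.1638 — 12 statements merged into one kernel-verified Lean document; each statement's English description precedes it below -/
import Mathlib

section
/- If f is a real polynomial that is weakly Hurwitz stable (non-vanishing on the open right half-plane {z : Re z > 0}), then every coefficient of f is non-negative or every coefficient of f is non-positive. -/
/-!
Factor `f` into irreducibles over `ℝ`. An irreducible factor `p` has a complex root `z`, which
lies in the closed left half-plane, and `p` is a constant multiple of `X - z` (if `z` is real) or
of `X ^ 2 - 2 Re z X + |z| ^ 2` (otherwise); both have non-negative coefficients since
`Re z ≤ 0`. Having coefficients of one sign is preserved under products.
-/

open Polynomial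

section OrderedRing

variable {R : Type*}

def CoeffsSameSign [Semiring R] [LE R] (p : R[X]) : Prop :=
  (∀ n, 0 ≤ p.coeff n) ∨ ∀ n, p.coeff n ≤ 0

theorem coeff_mul_nonneg [Semiring R] [PartialOrder R] [IsOrderedRing R] {p q : R[X]}
    (hp : ∀ n, 0 ≤ p.coeff n) (hq : ∀ n, 0 ≤ q.coeff n) (n : ℕ) : 0 ≤ (p * q).coeff n := by
  rw [coeff_mul]
  exact Finset.sum_nonneg fun _ _ => mul_nonneg (hp _) (hq _)

theorem coeffsSameSign_C [Semiring R] [LinearOrder R] (c : R) :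
    CoeffsSameSign (C c) := by
  rcases le_total 0 c with hc | hc
  · exact Or.inl fun n => by rw [coeff_C]; split_ifs <;> simp [hc]
  · exact Or.inr fun n => by rw [coeff_C]; split_ifs <;> simp [hc]

variable [CommRing R] [PartialOrder R] [IsOrderedRing R]

theorem coeffsSameSign_neg_iff {p : R[X]} : CoeffsSameSign (-p) ↔ CoeffsSameSign p := by
  simp only [CoeffsSameSign, coeff_neg, neg_nonneg, neg_nonpos, or_comm]

theorem CoeffsSameSign.mul {p q : R[X]} (hp : CoeffsSameSign p) (hq : CoeffsSameSign q) :
    CoeffsSameSign (p * q) := by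
  wlog hp' : ∀ n, 0 ≤ p.coeff n generalizing p
  · rw [← coeffsSameSign_neg_iff, ← neg_mul]
    exact this (coeffsSameSign_neg_iff.mpr hp) (fun n => by
      simpa using hp.resolve_left hp' n)
  wlog hq' : ∀ n, 0 ≤ q.coeff n generalizing q
  · rw [← coeffsSameSign_neg_iff, ← mul_neg]
    exact this (coeffsSameSign_neg_iff.mpr hq) (fun n => by
      simpa using hq.resolve_left hq' n)
  exact Or.inl (coeff_mul_nonneg hp' hq')

theorem coeff_X_sub_C_nonneg {r : R} (hr : r ≤ 0) (n : ℕ) : 0 ≤ (X - C r).coeff n := by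
  rw [coeff_sub, coeff_X, coeff_C]
  split_ifs <;> simp_all

theorem coeff_quadratic_nonneg {b c : R} (hb : b ≤ 0) (hc : 0 ≤ c) (n : ℕ) :
    0 ≤ (X ^ 2 - C b * X + C c).coeff n := by
  rw [coeff_add, coeff_sub, coeff_C_mul, coeff_X_pow, coeff_X, coeff_C]
  split_ifs <;> simp_all

end OrderedRing

def IsWeaklyHurwitzStable (f : ℝ[X]) : Prop :=
  ∀ z : ℂ, 0 < z.re → aeval z f ≠ 0

namespace IsWeaklyHurwitzStable

variable {f g : ℝ[X]}

theorem ne_zero (hf : IsWeaklyHurwitzStable f) : f ≠ 0 := by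
  rintro rfl
  exact hf 1 one_pos (aeval_zero 1)

theorem of_dvd (hf : IsWeaklyHurwitzStable f) (hgf : g ∣ f) : IsWeaklyHurwitzStable g := by
  obtain ⟨h, rfl⟩ := hgf
  intro z hz hgz
  exact hf z hz (by rw [map_mul, hgz, zero_mul])

theorem re_nonpos_of_aeval_eq_zero (hf : IsWeaklyHurwitzStable f) {z : ℂ} (hz : aeval z f = 0) :
    z.re ≤ 0 :=
  not_lt.mp fun hre => hf z hre hz

end IsWeaklyHurwitzStable

theorem exists_dvd_nonneg_coeffs_of_aeval_eq_zero {f : ℝ[X]} {z : ℂ} (hz : aeval z f = 0)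
    (hre : z.re ≤ 0) : ∃ q : ℝ[X], q ∣ f ∧ ¬IsUnit q ∧ ∀ n, 0 ≤ q.coeff n := by
  by_cases him : z.im = 0
  · have hroot : f.IsRoot z.re := by
      have hz_real : z = (z.re : ℂ) := Complex.ext rfl (by simp [him])
      rwa [hz_real, ← Complex.coe_algebraMap, aeval_algebraMap_apply_eq_algebraMap_eval,
        map_eq_zero_iff _ (algebraMap ℝ ℂ).injective] at hz
    exact ⟨X - C z.re, dvd_iff_isRoot.mpr hroot, not_isUnit_X_sub_C _,
      coeff_X_sub_C_nonneg hre⟩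
  · refine ⟨_, f.quadratic_dvd_of_aeval_eq_zero_im_ne_zero hz him, fun hunit => ?_,
      coeff_quadratic_nonneg (by linarith) (by positivity)⟩
    have hdeg := natDegree_eq_zero_of_isUnit hunit
    rw [show (X ^ 2 - C (2 * z.re) * X + C (‖z‖ ^ 2) : ℝ[X]).natDegree = 2 by compute_degree!]
      at hdeg
    exact two_ne_zero hdeg

theorem Irreducible.coeffsSameSign_of_isWeaklyHurwitzStable {f : ℝ[X]} (hirr : Irreducible f)
    (hf : IsWeaklyHurwitzStable f) : CoeffsSameSign f := by
  obtain ⟨z, hz⟩ := IsAlgClosed.exists_aeval_eq_zero ℂ f (degree_pos_of_irreducible hirr).ne'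
  obtain ⟨q, ⟨g, rfl⟩, hq, hq_nonneg⟩ :=
    exists_dvd_nonneg_coeffs_of_aeval_eq_zero hz (hf.re_nonpos_of_aeval_eq_zero hz)
  obtain ⟨c, -, rfl⟩ := isUnit_iff.mp ((hirr.isUnit_or_isUnit rfl).resolve_left hq)
  exact CoeffsSameSign.mul (Or.inl hq_nonneg) (coeffsSameSign_C c)

theorem IsWeaklyHurwitzStable.coeffsSameSign {f : ℝ[X]} (hf : IsWeaklyHurwitzStable f) :
    CoeffsSameSign f := by
  induction f using WfDvdMonoid.induction_on_irreducible with
  | zero => exact absurd rfl hf.ne_zero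
  | unit u hu =>
    obtain ⟨c, -, rfl⟩ := isUnit_iff.mp hu
    exact coeffsSameSign_C c
  | mul g i _ hirr ih =>
    exact (hirr.coeffsSameSign_of_isWeaklyHurwitzStable (hf.of_dvd (dvd_mul_right i g))).mul
      (ih (hf.of_dvd (dvd_mul_left g i)))

theorem stmt_2 (f : ℝ[X])
    (hstable : ∀ z : ℂ, 0 < z.re → aeval z f ≠ 0) :
    (∀ n, 0 ≤ f.coeff n) ∨ (∀ n, f.coeff n ≤ 0) :=
  IsWeaklyHurwitzStable.coeffsSameSign hstable
end

section
/- Let f(x) = x(x+2). Then the polynomial f² + f·f' + 3x(f·f'' − (f')²) equals x⁴ − 2x² − 8x, and this polynomial is not weakly Hurwitz stable; in particular, the claim that a·f² + b·f·f' + c·x(f·f'' − (f')²) is weakly Hurwitz stable for all a, b, c > 0 whenever f has only real negative zeros is false. -/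
/-!
For `f = X (X + 2)` the combination is `X⁴ - 2X² - 8X`, which changes sign on `[2, 3]` and so
has a positive real root. For the general claim, `g = (X + 1)²` has the single root `-1`, yet
with `(a, b, c) = (1, 1, 3)` the combination factors as `(X + 1)² (X² - 2X + 3)`, whose second
factor vanishes at `1 + √2 i`.
-/

open Polynomial

def WeaklyHurwitzStable (p : ℝ[X]) : Prop :=
  ∀ z : ℂ, 0 < z.re → aeval z p ≠ 0

theorem not_weaklyHurwitzStable_of_aeval_eq_zero {p : ℝ[X]} {z : ℂ} (hz : 0 < z.re)
    (h : aeval z p = 0) : ¬ WeaklyHurwitzStable p :=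
  fun hp => hp z hz h

noncomputable def hurwitzCombination (a b c : ℝ) (f : ℝ[X]) : ℝ[X] :=
  C a * f ^ 2 + C b * (f * derivative f)
    + C c * X * (f * derivative (derivative f) - (derivative f) ^ 2)

theorem combination_X_mul_X_add_two :
    (X * (X + C 2)) ^ 2 + X * (X + C 2) * derivative (X * (X + C 2))
        + C 3 * X * (X * (X + C 2) * derivative (derivative (X * (X + C 2)))
          - (derivative (X * (X + C 2))) ^ 2)
      = (X ^ 4 - C 2 * X ^ 2 - C 8 * X : ℝ[X]) := by
  simp only [derivative_mul, derivative_add, derivative_X, map_ofNat, derivative_one,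
    derivative_ofNat, derivative_zero]
  ring

theorem exists_pos_root_quartic : ∃ r : ℝ, 0 < r ∧ r ^ 4 - 2 * r ^ 2 - 8 * r = 0 := by
  obtain ⟨r, hr, hr0⟩ := intermediate_value_Icc (by norm_num : (2 : ℝ) ≤ 3)
    (f := fun x : ℝ => x ^ 4 - 2 * x ^ 2 - 8 * x) (by fun_prop)
    (show (0 : ℝ) ∈ Set.Icc _ _ by norm_num)
  exact ⟨r, by linarith [hr.1], hr0⟩

theorem not_weaklyHurwitzStable_quartic :
    ¬ WeaklyHurwitzStable (X ^ 4 - C 2 * X ^ 2 - C 8 * X) := by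
  obtain ⟨r, hr, hr0⟩ := exists_pos_root_quartic
  refine not_weaklyHurwitzStable_of_aeval_eq_zero (z := r) (by simpa using hr) ?_
  simp only [map_sub, map_mul, map_pow, aeval_X, aeval_C, Complex.coe_algebraMap]
  exact_mod_cast hr0

theorem hurwitzCombination_X_add_one_sq :
    hurwitzCombination 1 1 3 ((X + 1) ^ 2) = (X + 1) ^ 2 * (X ^ 2 - 2 * X + 3) := by
  simp only [hurwitzCombination, derivative_sq, derivative_add, derivative_mul, derivative_X,
    derivative_one, derivative_ofNat, derivative_zero, map_one, map_ofNat]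
  ring

theorem aeval_one_add_sqrt_two_mul_I :
    aeval (1 + Real.sqrt 2 * Complex.I) (X ^ 2 - 2 * X + 3 : ℝ[X]) = 0 := by
  have hs2 : ((Real.sqrt 2 : ℝ) : ℂ) ^ 2 = 2 := by
    norm_cast
    exact Real.sq_sqrt (by norm_num)
  simp only [map_add, map_sub, map_mul, map_pow, aeval_X, map_ofNat]
  linear_combination (Complex.I ^ 2) * hs2 + 2 * Complex.I_sq

theorem not_weaklyHurwitzStable_hurwitzCombination_X_add_one_sq :
    ¬ WeaklyHurwitzStable (hurwitzCombination 1 1 3 ((X + 1) ^ 2)) := by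
  refine not_weaklyHurwitzStable_of_aeval_eq_zero (z := 1 + Real.sqrt 2 * Complex.I)
    (by simp) ?_
  rw [hurwitzCombination_X_add_one_sq, map_mul, aeval_one_add_sqrt_two_mul_I, mul_zero]

theorem eq_neg_one_of_aeval_X_add_one_sq_eq_zero {z : ℂ}
    (hz : aeval z ((X + 1) ^ 2 : ℝ[X]) = 0) : z = -1 := by
  simp only [map_pow, map_add, aeval_X, map_one, pow_eq_zero_iff two_ne_zero] at hz
  linear_combination hz

theorem stmt_3 (f : ℝ[X]) (hf : f = X * (X + C 2)) :
    (f ^ 2 + f * derivative f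
        + C 3 * X * (f * derivative (derivative f) - (derivative f) ^ 2)
      = X ^ 4 - C 2 * X ^ 2 - C 8 * X) ∧
    ¬ (∀ z : ℂ, 0 < z.re → aeval z (X ^ 4 - C 2 * X ^ 2 - C 8 * X : ℝ[X]) ≠ 0) ∧
    ¬ (∀ g : ℝ[X], g ≠ 0 →
        (∀ z : ℂ, aeval z g = 0 → ∃ r : ℝ, r < 0 ∧ z = (r : ℂ)) →
        ∀ a b c : ℝ, 0 < a → 0 < b → 0 < c →
          ∀ z : ℂ, 0 < z.re →
            aeval z (C a * g ^ 2 + C b * (g * derivative g)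
              + C c * X * (g * derivative (derivative g) - (derivative g) ^ 2)) ≠ 0) := by
  subst hf
  refine ⟨combination_X_mul_X_add_two, not_weaklyHurwitzStable_quartic, fun H => ?_⟩
  have hg : ((X + 1) ^ 2 : ℝ[X]) ≠ 0 := pow_ne_zero 2 (X_add_C_ne_zero 1)
  have hroots : ∀ z : ℂ, aeval z ((X + 1) ^ 2 : ℝ[X]) = 0 → ∃ r : ℝ, r < 0 ∧ z = (r : ℂ) :=
    fun z hz => ⟨-1, by norm_num, by simpa using eq_neg_one_of_aeval_X_add_one_sq_eq_zero hz⟩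
  exact not_weaklyHurwitzStable_hurwitzCombination_X_add_one_sq
    (H _ hg hroots 1 1 3 one_pos one_pos (by norm_num))
end

section
/- Let B_k denote the univariate Bell polynomials defined by B_0(x) = 1 and B_{k+1}(x) = x(B_k(x) + B_k'(x)). Then for every k ∈ ℕ, the Turán expression (B_{k+1}(x))² − B_{k+2}(x)·B_k(x) is weakly Hurwitz stable, i.e., non-zero for all complex x with Re x > 0. -/
/-!
Over `ℂ`, every `B k` has all its zeros in `(-∞, 0]`. Indeed, if `p = c ∏ (X + r)` with all
`r ≥ 0` and `z ∉ (-∞, 0]`, then `(p + p')(z) = p(z) (1 + ∑ 1 / (z + r))`, and multiplication by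
`‖z‖ + z`, which bisects the angle between `1` and `z`, moves `1` into the open and every
`1 / (z + r)` into the closed right half-plane; so `X (p + p')` again has its zeros in `(-∞, 0]`.

For `p = B k` the Turán expression is `-X (p² + p² (X p' / p)')`, and `(X p' / p)' = ∑ r / (X + r)²`.
When `Re x > 0`, multiplication by `x` moves every `r / (x + r)²` into the closed right half-plane,
so `Re (x (1 + ∑ r / (x + r)²)) ≥ Re x > 0`.

Both sums are handled without division: `Φ p = (‖z‖ + z) p'(z) conj p(z)` satisfies
`Φ (f g) = |g(z)|² Φ f + |f(z)|² Φ g`, and likewise `x (p² (X p' / p)')(x) conj p(x)²` with weights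
`|·|⁴`, so the sign of their real parts only has to be checked on linear factors.
-/

open Polynomial Complex ComplexConjugate

theorem Complex.norm_add_re_pos_of_mem_slitPlane {z : ℂ} (hz : z ∈ slitPlane) :
    0 < ‖z‖ + z.re := by
  rcases mem_slitPlane_iff.1 hz with h | h
  · linarith [norm_nonneg z]
  · linarith [abs_re_lt_norm.2 h, neg_abs_le z.re]

namespace Polynomial

@[elab_as_elim]
theorem induction_on_roots {K : Type*} [Field K] [IsAlgClosed K] {P : K[X] → Prop} (p : K[X])
    (hC : ∀ c, P (C c)) (hmul : ∀ f g, P f → P g → P (f * g))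
    (hroot : ∀ a ∈ p.roots, P (X - C a)) : P p := by
  rw [(IsAlgClosed.splits p).eq_prod_roots]
  refine hmul _ _ (hC _) (Multiset.prod_induction P _ hmul (by simpa using hC 1) ?_)
  intro q hq
  obtain ⟨a, ha, rfl⟩ := Multiset.mem_map.1 hq
  exact hroot a ha

/-- `p² (X p' / p)'`, which is `p² ∑ -a / (X - a)²` when `p = ∏ (X - a)`. -/
noncomputable def turanCore {R : Type*} [CommRing R] (p : R[X]) : R[X] :=
  p * derivative p - X * (derivative p ^ 2 - p * derivative (derivative p))

section turanCore

variable {R : Type*} [CommRing R]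

theorem turanCore_mul (f g : R[X]) :
    turanCore (f * g) = g ^ 2 * turanCore f + f ^ 2 * turanCore g := by
  simp only [turanCore, derivative_mul, derivative_add]
  ring

theorem turanCore_C (c : R) : turanCore (C c) = 0 := by
  simp [turanCore]

theorem turanCore_X_sub_C (a : R) : turanCore (X - C a) = -C a := by
  simp [turanCore]

theorem turan_X_mul_add_derivative (p : R[X]) :
    (X * (p + derivative p)) ^ 2
        - X * (X * (p + derivative p) + derivative (X * (p + derivative p))) * p
      = -(X * (p ^ 2 + turanCore p)) := by
  simp only [turanCore, derivative_mul, derivative_add, derivative_X]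
  ring

end turanCore

theorem re_le_zero_and_im_eq_zero_of_mem_roots {p : ℂ[X]}
    (hp : ∀ z ∈ slitPlane, p.eval z ≠ 0) {a : ℂ} (ha : a ∈ p.roots) : a.re ≤ 0 ∧ a.im = 0 := by
  by_contra h
  exact hp a (by simpa [mem_slitPlane_iff, or_iff_not_imp_left] using h) (isRoot_of_mem_roots ha)

theorem re_mul_eval_derivative_mul_conj_nonneg {p : ℂ[X]} (hp : ∀ z ∈ slitPlane, p.eval z ≠ 0)
    (z : ℂ) : 0 ≤ ((‖z‖ + z) * (derivative p).eval z * conj (p.eval z)).re := by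
  refine induction_on_roots p (fun c => by simp) (fun f g hf hg => ?_) (fun a ha => ?_)
  · have key : (‖z‖ + z) * (derivative (f * g)).eval z * conj ((f * g).eval z)
        = (‖z‖ + z) * (derivative f).eval z * conj (f.eval z) * (normSq (g.eval z) : ℂ)
          + (‖z‖ + z) * (derivative g).eval z * conj (g.eval z) * (normSq (f.eval z) : ℂ) := by
      simp only [derivative_mul, eval_add, eval_mul, map_mul, ← mul_conj]
      ring
    rw [key, add_re, re_mul_ofReal, re_mul_ofReal]
    exact add_nonneg (mul_nonneg hf (normSq_nonneg _)) (mul_nonneg hg (normSq_nonneg _))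
  · obtain ⟨ha_re, ha_im⟩ := re_le_zero_and_im_eq_zero_of_mem_roots hp ha
    have hnorm : ‖z‖ ^ 2 = z.re * z.re + z.im * z.im := by rw [Complex.sq_norm, normSq_apply]
    have key : ((‖z‖ + z) * (derivative (X - C a)).eval z * conj ((X - C a).eval z)).re
        = (‖z‖ - a.re) * (‖z‖ + z.re) := by
      simp only [derivative_X, derivative_C, sub_zero, eval_one, mul_one,
        eval_sub, eval_X, eval_C, map_sub, mul_re, add_re, ofReal_re, sub_re, conj_re, add_im,
        ofReal_im, zero_add, sub_im, conj_im, ha_im, neg_zero, mul_neg, sub_neg_eq_add]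
      linear_combination -hnorm
    rw [key]
    exact mul_nonneg (by linarith [norm_nonneg z]) (by linarith [abs_re_le_norm z, neg_abs_le z.re])

theorem eval_add_derivative_ne_zero {p : ℂ[X]} (hp : ∀ z ∈ slitPlane, p.eval z ≠ 0) {z : ℂ}
    (hz : z ∈ slitPlane) : (p + derivative p).eval z ≠ 0 := by
  intro h
  have key : ((‖z‖ + z) * (p + derivative p).eval z * conj (p.eval z)).re
      = (‖z‖ + z.re) * normSq (p.eval z)
        + ((‖z‖ + z) * (derivative p).eval z * conj (p.eval z)).re := by
    rw [eval_add, mul_add, add_mul, add_re, mul_assoc _ (p.eval z), mul_conj, re_mul_ofReal]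
    simp
  rw [h, mul_zero, zero_mul, zero_re] at key
  have := mul_pos (norm_add_re_pos_of_mem_slitPlane hz) (normSq_pos.2 (hp z hz))
  linarith [re_mul_eval_derivative_mul_conj_nonneg hp z]

theorem eval_X_mul_add_derivative_ne_zero {p : ℂ[X]} (hp : ∀ z ∈ slitPlane, p.eval z ≠ 0) :
    ∀ z ∈ slitPlane, (X * (p + derivative p)).eval z ≠ 0 := fun z hz => by
  rw [eval_mul, eval_X]
  exact mul_ne_zero (slitPlane_ne_zero hz) (eval_add_derivative_ne_zero hp hz)

theorem re_mul_eval_turanCore_mul_conj_nonneg {p : ℂ[X]} (hp : ∀ z ∈ slitPlane, p.eval z ≠ 0)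
    {x : ℂ} (hx : 0 ≤ x.re) : 0 ≤ (x * (turanCore p).eval x * conj (p.eval x ^ 2)).re := by
  refine induction_on_roots p (fun c => by simp [turanCore_C]) (fun f g hf hg => ?_)
    (fun a ha => ?_)
  · have key : x * (turanCore (f * g)).eval x * conj ((f * g).eval x ^ 2)
        = x * (turanCore f).eval x * conj (f.eval x ^ 2) * (normSq (g.eval x ^ 2) : ℂ)
          + x * (turanCore g).eval x * conj (g.eval x ^ 2) * (normSq (f.eval x ^ 2) : ℂ) := by
      simp only [turanCore_mul, eval_add, eval_mul, eval_pow, mul_pow, map_mul, ← mul_conj]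
      ring
    rw [key, add_re, re_mul_ofReal, re_mul_ofReal]
    exact add_nonneg (mul_nonneg hf (normSq_nonneg _)) (mul_nonneg hg (normSq_nonneg _))
  · obtain ⟨ha_re, ha_im⟩ := re_le_zero_and_im_eq_zero_of_mem_roots hp ha
    have key : (x * (turanCore (X - C a)).eval x * conj ((X - C a).eval x ^ 2)).re
        = -a.re * (x.re * (x.re - a.re) ^ 2 + (x.re - 2 * a.re) * x.im ^ 2) := by
      simp only [turanCore_X_sub_C, eval_neg, eval_C, mul_neg, eval_sub, eval_X, sq, map_mul,
        map_sub, neg_mul, neg_re, mul_re, ha_im, mul_zero, sub_zero, sub_re, conj_re, sub_im,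
        conj_im, neg_zero, neg_neg, mul_im, zero_add, neg_sub]
      ring
    rw [key]
    have := mul_nonneg hx (sq_nonneg (x.re - a.re))
    have := mul_nonneg (by linarith : 0 ≤ x.re - 2 * a.re) (sq_nonneg x.im)
    exact mul_nonneg (by linarith) (by linarith)

theorem eval_sq_add_turanCore_ne_zero {p : ℂ[X]} (hp : ∀ z ∈ slitPlane, p.eval z ≠ 0) {x : ℂ}
    (hx : 0 < x.re) : (p ^ 2 + turanCore p).eval x ≠ 0 := by
  intro h
  have key : (x * (p ^ 2 + turanCore p).eval x * conj (p.eval x ^ 2)).re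
      = x.re * normSq (p.eval x ^ 2)
        + (x * (turanCore p).eval x * conj (p.eval x ^ 2)).re := by
    rw [eval_add, eval_pow, mul_add, add_mul, add_re, mul_assoc x, mul_conj, re_mul_ofReal]
  rw [h, mul_zero, zero_mul, zero_re] at key
  have hpx := hp x (mem_slitPlane_iff.2 (Or.inl hx))
  have := mul_pos hx (normSq_pos.2 (pow_ne_zero 2 hpx))
  linarith [re_mul_eval_turanCore_mul_conj_nonneg hp hx.le]

end Polynomial

theorem stmt_4 (B : ℕ → ℝ[X]) (hB0 : B 0 = 1)
    (hBrec : ∀ k, B (k + 1) = X * (B k + derivative (B k))) :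
    ∀ k : ℕ, ∀ x : ℂ, 0 < x.re →
      (aeval x (B (k + 1))) ^ 2 - aeval x (B (k + 2)) * aeval x (B k) ≠ 0 := by
  intro k x hx
  set P : ℕ → ℂ[X] := fun j => (B j).map (algebraMap ℝ ℂ) with hP
  have hPrec : ∀ j, P (j + 1) = X * (P j + derivative (P j)) := fun j => by
    simp [hP, hBrec, derivative_map]
  have hPzeros : ∀ j, ∀ z ∈ slitPlane, (P j).eval z ≠ 0 := by
    intro j
    induction j with
    | zero => simp [hP, hB0]
    | succ j ih => rw [hPrec]; exact eval_X_mul_add_derivative_ne_zero ih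
  have hturan := congrArg (eval x) (turan_X_mul_add_derivative (P k))
  rw [← hPrec, ← hPrec] at hturan
  simp only [← eval_map_algebraMap]
  rw [← eval_pow, ← eval_mul, ← eval_sub, hturan, eval_neg, eval_mul, eval_X, neg_ne_zero]
  exact mul_ne_zero (slitPlane_ne_zero (mem_slitPlane_iff.2 (Or.inl hx)))
    (eval_sq_add_turanCore_ne_zero (hPzeros k) hx)
end

section
/- Let {P_k} be a sequence of real polynomials with deg P_k = k, P_0 a non-zero constant, satisfying P_{k+1}(x) = a(x+b)(P_k'(x) + c_k P_k(x)) for all k, where a ≠ 0, b ≥ 0, and 0 < c_k ≤ c_{k+1} for all k. Then for every k, the Turán expression (P_{k+1}(x))² − P_{k+2}(x)·P_k(x) is non-zero for all complex x with Re x > −b. -/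
/-!
Over `ℂ`, every `P k` has only real roots, all `≤ -b`: if `p` has this property and `w` is a root
of `p' + c p` with `p w ≠ 0`, then `∑ 1 / (w - ρ) = -c` over the roots `ρ` of `p`, and comparing
imaginary and real parts forces `w` to be real and `< -b`.

For `Re x > -b` put `z = x + b`, `q = 1 + (c (k+1) - c k) z` and `Sⱼ = ∑ (x - ρ)⁻ʲ`. Then the Turán
expression is `-a² z P_k(x)² (q (S₁ + c k) - z S₂)`, and `z q̄` times the last factor equals
`c k z |q|²` plus, for each root, `q̄ w (q - w)` with `w = z / (x - ρ)`. As `w` lies in the disc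
`|w - 1/2| ≤ 1/2` and `Re q ≥ 1`, all these terms have nonnegative real part, the first one positive.
-/

open Polynomial ComplexConjugate

theorem Complex.re_multiset_sum (s : Multiset ℂ) : s.sum.re = (s.map Complex.re).sum :=
  map_multiset_sum Complex.reAddGroupHom s

theorem Complex.im_multiset_sum (s : Multiset ℂ) : s.sum.im = (s.map Complex.im).sum :=
  map_multiset_sum Complex.imAddGroupHom s

section Wronskian

variable {K : Type*} [Field K]

theorem eval_derivative_sq_sub_prod_X_sub_C (s : Multiset K) {x : K} (hx : ∀ z ∈ s, x - z ≠ 0) :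
    (derivative (s.map (X - C ·)).prod).eval x ^ 2
        - (s.map (X - C ·)).prod.eval x * (derivative (derivative (s.map (X - C ·)).prod)).eval x
      = (s.map (X - C ·)).prod.eval x ^ 2 * (s.map fun z ↦ 1 / (x - z) ^ 2).sum := by
  induction s using Multiset.induction_on with
  | empty => simp
  | cons z s ih =>
    have hz : x - z ≠ 0 := hx z (Multiset.mem_cons_self z s)
    have ih := ih fun w hw ↦ hx w (Multiset.mem_cons_of_mem hw)
    simp only [Multiset.map_cons, Multiset.prod_cons, Multiset.sum_cons, derivative_mul,
      derivative_add, derivative_sub, derivative_X, derivative_C, sub_zero, eval_add, eval_mul,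
      eval_sub, eval_X, eval_C, one_mul] at ih ⊢
    field_simp
    linear_combination (x - z) ^ 2 * ih

theorem Polynomial.Splits.eval_derivative_sq_sub_eval_mul_eval_derivative_derivative
    {f : K[X]} (hf : f.Splits) {x : K} (hx : f.eval x ≠ 0) :
    f.derivative.eval x ^ 2 - f.eval x * f.derivative.derivative.eval x
      = f.eval x ^ 2 * (f.roots.map fun z ↦ 1 / (x - z) ^ 2).sum := by
  have hroots : ∀ z ∈ f.roots, x - z ≠ 0 := fun z hz hxz ↦ by
    rw [sub_eq_zero] at hxz
    exact hx (hxz ▸ (mem_roots'.mp hz).2)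
  have key := eval_derivative_sq_sub_prod_X_sub_C f.roots hroots
  have hfs := hf.eq_prod_roots
  generalize f.roots = s at hfs key ⊢
  rw [hfs]
  simp only [derivative_C_mul, eval_mul, eval_C]
  linear_combination f.leadingCoeff ^ 2 * key

end Wronskian

namespace Complex

theorem re_conj_mul_mul_sub_nonneg {q w : ℂ} (hq : 1 ≤ q.re) (hw : normSq w ≤ w.re) :
    0 ≤ (conj q * w * (q - w)).re := by
  simp only [normSq_apply] at hw
  simp only [mul_re, mul_im, conj_re, conj_im, sub_re, sub_im]
  nlinarith [mul_nonneg (add_nonneg (sq_nonneg q.re) (sq_nonneg q.im)) (sub_nonneg.mpr hw),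
    mul_nonneg (by nlinarith : 0 ≤ q.re ^ 2 - q.re) (sq_nonneg w.re),
    mul_nonneg (by nlinarith : 0 ≤ q.re ^ 2 + q.re - 1) (sq_nonneg w.im),
    sq_nonneg (q.im * w.re - w.im), sq_nonneg (q.im * w.im)]

theorem normSq_div_add_ofReal_le_re {z : ℂ} (hz : 0 ≤ z.re) {t : ℝ} (ht : 0 ≤ t) :
    normSq (z / (z + t)) ≤ (z / (z + t)).re := by
  rw [normSq_div, div_re, ← add_div]
  apply div_le_div_of_nonneg_right _ (normSq_nonneg _)
  simp only [normSq_apply, add_re, add_im, ofReal_re, ofReal_im, add_zero]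
  nlinarith [mul_nonneg hz ht]

end Complex

open Complex

def RootsRealLE (β : ℝ) (p : ℂ[X]) : Prop :=
  ∀ ρ ∈ p.roots, ρ ∈ ofReal '' Set.Iic β

namespace RootsRealLE

variable {β : ℝ} {p : ℂ[X]}

theorem eval_ne_zero (hp : RootsRealLE β p) (hp0 : p ≠ 0) {x : ℂ} (hx : β < x.re) :
    p.eval x ≠ 0 := fun hpx ↦ by
  obtain ⟨r, hr, rfl⟩ := hp x (mem_roots'.mpr ⟨hp0, hpx⟩)
  simp only [ofReal_re] at hx
  exact (lt_of_le_of_lt hr hx).false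

theorem derivative_add_C_mul (hp : RootsRealLE β p) {c : ℝ} (hc : 0 < c) :
    RootsRealLE β (derivative p + C (c : ℂ) * p) := by
  intro w hw
  obtain ⟨hR, hRw⟩ := mem_roots'.mp hw
  have hp0 : p ≠ 0 := by rintro rfl; simp at hR
  by_cases hpw : p.eval w = 0
  · exact hp w (mem_roots'.mpr ⟨hp0, hpw⟩)
  set S := (p.roots.map fun ρ ↦ 1 / (w - ρ)).sum
  set M := (p.roots.map fun ρ ↦ (normSq (w - ρ))⁻¹).sum
  have hS : S = -c := by
    have h : p.eval w * (S + c) = 0 := by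
      have h := hRw
      rw [IsRoot, eval_add, eval_mul, eval_C,
        (IsAlgClosed.splits p).eval_derivative_eq_eval_mul_sum hpw] at h
      linear_combination h
    exact eq_neg_of_add_eq_zero_left ((mul_eq_zero.mp h).resolve_left hpw)
  have hM : 0 ≤ M := Multiset.sum_nonneg fun _ hm ↦ by
    obtain ⟨ρ, -, rfl⟩ := Multiset.mem_map.mp hm
    exact inv_nonneg.mpr (normSq_nonneg _)
  have hIm : S.im = -w.im * M := by
    rw [im_multiset_sum, Multiset.map_map, ← Multiset.sum_map_mul_left]
    refine congrArg Multiset.sum (Multiset.map_congr rfl fun ρ hρ ↦ ?_)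
    obtain ⟨r, -, rfl⟩ := hp ρ hρ
    simp [inv_im, div_eq_mul_inv]
  have hRe : (w.re - β) * M ≤ S.re := by
    rw [re_multiset_sum, Multiset.map_map, ← Multiset.sum_map_mul_left]
    refine Multiset.sum_map_le_sum_map _ _ fun ρ hρ ↦ ?_
    obtain ⟨r, hr, rfl⟩ := hp ρ hρ
    rw [Function.comp_apply, one_div, inv_re, sub_re, ofReal_re, div_eq_mul_inv]
    exact mul_le_mul_of_nonneg_right (by linarith [Set.mem_Iic.mp hr])
      (inv_nonneg.mpr (normSq_nonneg _))
  rw [hS, neg_re, ofReal_re] at hRe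
  rw [hS, neg_im, ofReal_im, neg_zero] at hIm
  have hMpos : 0 < M := lt_of_le_of_ne hM fun h ↦ by rw [← h, mul_zero] at hRe; linarith
  refine ⟨w.re, Set.mem_Iic.mpr ?_, ext rfl ?_⟩
  · nlinarith
  · have := (mul_eq_zero.mp hIm.symm).resolve_right hMpos.ne'
    rw [ofReal_im]
    linarith

theorem mul_sum_inv_add_sub_mul_sum_inv_sq_ne_zero (hp : RootsRealLE β p) {x : ℂ}
    (hx : β < x.re) {c : ℝ} (hc : 0 < c) {q : ℂ} (hq : 1 ≤ q.re) :
    q * ((p.roots.map fun ρ ↦ 1 / (x - ρ)).sum + c)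
      - (x - β) * (p.roots.map fun ρ ↦ 1 / (x - ρ) ^ 2).sum ≠ 0 := by
  set z : ℂ := x - β
  set S := (p.roots.map fun ρ ↦ 1 / (x - ρ)).sum
  set S₂ := (p.roots.map fun ρ ↦ 1 / (x - ρ) ^ 2).sum
  set T := (p.roots.map fun ρ ↦ conj q * (z / (x - ρ)) * (q - z / (x - ρ))).sum
  have hz : 0 < z.re := by simpa [z] using hx
  have key : z * conj q * (q * (S + c) - z * S₂) = c * z * normSq q + T := by
    have hzS : z * S = (p.roots.map fun ρ ↦ z / (x - ρ)).sum := by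
      simp only [S, ← Multiset.sum_map_mul_left, mul_one_div]
    have hzS₂ : z ^ 2 * S₂ = (p.roots.map fun ρ ↦ (z / (x - ρ)) ^ 2).sum := by
      simp only [S₂, ← Multiset.sum_map_mul_left, mul_one_div, div_pow]
    have hT : T = conj q * q * (z * S) - conj q * (z ^ 2 * S₂) := by
      rw [hzS, hzS₂, ← Multiset.sum_map_mul_left, ← Multiset.sum_map_mul_left,
        ← Multiset.sum_map_sub]
      exact congrArg Multiset.sum (Multiset.map_congr rfl fun _ _ ↦ by ring)
    rw [hT, ← mul_conj]
    ring
  have hc_term : 0 < (c * z * normSq q : ℂ).re := by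
    have hq0 : q ≠ 0 := fun h ↦ by simp [h] at hq; linarith
    rw [show (c : ℂ) * z * normSq q = ((c * normSq q : ℝ) : ℂ) * z by push_cast; ring,
      re_ofReal_mul]
    exact mul_pos (mul_pos hc (normSq_pos.mpr hq0)) hz
  have hT : 0 ≤ T.re := by
    rw [re_multiset_sum, Multiset.map_map]
    refine Multiset.sum_nonneg fun _ hm ↦ ?_
    obtain ⟨ρ, hρ, rfl⟩ := Multiset.mem_map.mp hm
    obtain ⟨r, hr, rfl⟩ := hp ρ hρ
    have hxr : x - r = z + ((β - r : ℝ) : ℂ) := by push_cast [z]; ring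
    rw [Function.comp_apply, hxr]
    exact re_conj_mul_mul_sub_nonneg hq
      (normSq_div_add_ofReal_le_re hz.le (sub_nonneg.mpr (Set.mem_Iic.mp hr)))
  have hpos : 0 < (z * conj q * (q * (S + c) - z * S₂)).re := by
    rw [key, add_re]
    linarith
  intro hG
  simp [hG] at hpos

theorem turan_factor_ne_zero (hp : RootsRealLE β p) (hp0 : p ≠ 0) {x : ℂ} (hx : β < x.re)
    {c₀ c₁ : ℝ} (hc₀ : 0 < c₀) (hc : c₀ ≤ c₁) :
    (x - β) * ((derivative p).eval x ^ 2 - p.eval x * (derivative (derivative p)).eval x)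
      - (1 + (c₁ - c₀) * (x - β)) * p.eval x * ((derivative p).eval x + c₀ * p.eval x) ≠ 0 := by
  have hV := hp.eval_ne_zero hp0 hx
  have hsplit := IsAlgClosed.splits p
  have hq : 1 ≤ (1 + (c₁ - c₀) * (x - β) : ℂ).re := by
    simpa using mul_nonneg (sub_nonneg.mpr hc) (sub_nonneg.mpr hx.le)
  have hG := hp.mul_sum_inv_add_sub_mul_sum_inv_sq_ne_zero hx hc₀ hq
  rw [hsplit.eval_derivative_sq_sub_eval_mul_eval_derivative_derivative hV,
    hsplit.eval_derivative_eq_eval_mul_sum hV]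
  contrapose! hG
  have h : p.eval x ^ 2 * ((1 + (c₁ - c₀) * (x - β)) * ((p.roots.map fun ρ ↦ 1 / (x - ρ)).sum + c₀)
      - (x - β) * (p.roots.map fun ρ ↦ 1 / (x - ρ) ^ 2).sum) = 0 := by
    linear_combination -hG
  exact (mul_eq_zero.mp h).resolve_left (pow_ne_zero 2 hV)

end RootsRealLE

theorem eval_sq_sub_eval_mul_eval_of_rec {R : Type*} [CommRing R] {p p₁ p₂ : R[X]} {a β c₀ c₁ : R}
    (h₁ : p₁ = C a * ((X - C β) * (derivative p + C c₀ * p)))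
    (h₂ : p₂ = C a * ((X - C β) * (derivative p₁ + C c₁ * p₁))) (x : R) :
    p₁.eval x ^ 2 - p₂.eval x * p.eval x
      = a ^ 2 * (x - β) * ((x - β) * ((derivative p).eval x ^ 2
          - p.eval x * (derivative (derivative p)).eval x)
        - (1 + (c₁ - c₀) * (x - β)) * p.eval x * ((derivative p).eval x + c₀ * p.eval x)) := by
  subst h₂ h₁
  simp only [derivative_mul, derivative_add, derivative_sub, derivative_C, derivative_X,
    eval_mul, eval_add, eval_sub, eval_C, eval_X, eval_zero, eval_one]
  ring

theorem RootsRealLE.of_rec {Q : ℕ → ℂ[X]} {a : ℂ} {β : ℝ} {c : ℕ → ℝ} (hc : ∀ k, 0 < c k)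
    (h0 : (Q 0).natDegree = 0)
    (hrec : ∀ k, Q (k + 1) = C a * ((X - C (β : ℂ)) * (derivative (Q k) + C (c k : ℂ) * Q k)))
    (k : ℕ) : RootsRealLE β (Q k) := by
  induction k with
  | zero =>
    intro ρ hρ
    have : (Q 0).roots = 0 :=
      Multiset.card_eq_zero.mp (Nat.le_zero.mp ((card_roots' (Q 0)).trans h0.le))
    simp [this] at hρ
  | succ k ih =>
    intro ρ hρ
    rw [hrec k] at hρ
    obtain ⟨hne, hroot⟩ := mem_roots'.mp hρ
    have ha : a ≠ 0 := fun h ↦ hne (by simp [h])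
    have hR := right_ne_zero_of_mul (right_ne_zero_of_mul hne)
    simp only [IsRoot, eval_mul, eval_C, eval_sub, eval_X, mul_eq_zero, ha, false_or,
      sub_eq_zero] at hroot
    rcases hroot with rfl | hRρ
    · exact ⟨β, Set.mem_Iic.mpr le_rfl, rfl⟩
    · exact ih.derivative_add_C_mul (hc k) ρ (mem_roots'.mpr ⟨hR, hRρ⟩)

theorem stmt_5_general (P : ℕ → ℝ[X]) (a b : ℝ) (c : ℕ → ℝ)
    (ha : a ≠ 0)
    (hc : ∀ k, 0 < c k) (hcmono : ∀ k, c k ≤ c (k + 1))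
    (hdeg : ∀ k, (P k).natDegree = k)
    (hP0 : ∃ r : ℝ, r ≠ 0 ∧ P 0 = C r)
    (hrec : ∀ k, P (k + 1) = C a * ((X + C b) * (derivative (P k) + C (c k) * P k))) :
    ∀ k : ℕ, ∀ x : ℂ, -b < x.re →
      (aeval x (P (k + 1))) ^ 2 - aeval x (P (k + 2)) * aeval x (P k) ≠ 0 := by
  set Q : ℕ → ℂ[X] := fun k ↦ (P k).map (algebraMap ℝ ℂ)
  have hQrec : ∀ k, Q (k + 1)
      = C (a : ℂ) * ((X - C ((-b : ℝ) : ℂ)) * (derivative (Q k) + C (c k : ℂ) * Q k)) := by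
    intro k
    simp only [Q, hrec k, Polynomial.map_mul, Polynomial.map_add, map_C, map_X, derivative_map]
    simp [sub_eq_add_neg]
  have hroots := RootsRealLE.of_rec hc (by simp [Q, hdeg 0]) hQrec
  intro k x hx
  have hPk : P k ≠ 0 := by
    cases k with
    | zero => obtain ⟨r, hr, h⟩ := hP0; simpa [h] using hr
    | succ n => exact fun h ↦ by simpa [h] using hdeg (n + 1)
  have hQk : Q k ≠ 0 := (Polynomial.map_ne_zero_iff (algebraMap ℝ ℂ).injective).mpr hPk
  simp only [← eval_map_algebraMap]
  rw [eval_sq_sub_eval_mul_eval_of_rec (hQrec k) (hQrec (k + 1)) x]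
  refine mul_ne_zero (mul_ne_zero (pow_ne_zero 2 (ofReal_ne_zero.mpr ha)) ?_) ?_
  · exact fun h ↦ by simp [sub_eq_zero.mp h] at hx
  · exact (hroots k).turan_factor_ne_zero hQk hx (hc k) (hcmono k)

theorem stmt_5 (P : ℕ → ℝ[X]) (a b : ℝ) (c : ℕ → ℝ)
    (ha : a ≠ 0) (hb : 0 ≤ b)
    (hc : ∀ k, 0 < c k) (hcmono : ∀ k, c k ≤ c (k + 1))
    (hdeg : ∀ k, (P k).natDegree = k)
    (hP0 : ∃ r : ℝ, r ≠ 0 ∧ P 0 = C r)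
    (hrec : ∀ k, P (k + 1) = C a * ((X + C b) * (derivative (P k) + C (c k) * P k))) :
    ∀ k : ℕ, ∀ x : ℂ, -b < x.re →
      (aeval x (P (k + 1))) ^ 2 - aeval x (P (k + 2)) * aeval x (P k) ≠ 0 :=
  stmt_5_general P a b c ha hc hcmono hdeg hP0 hrec
end

section
/- Let {P_k} be a sequence of real polynomials with deg P_k = k, P_0 a non-zero constant, satisfying P_{k+1}(x) = a(x+b)(P_k'(x) + c_k P_k(x)) with a ≠ 0, b ≥ 0, and 0 < c_k ≤ c_{k+1} for all k. Then for every k ≥ 1, all zeros of P_k are real, −b is a zero of P_k, and the remaining zeros are strictly less than −b; moreover the zeros of P_{k-1} strictly interlace those of P_k away from −b. -/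
open Polynomial Finset Lagrange

/-!
Induction on `k` with the invariant `P k = L ∏ i < k, (X - x i)`, `L ≠ 0`,
`x 0 < ⋯ < x (k - 1) ≤ -b`. Write `P (k + 1) = a (X + b) Q` with `Q = P k' + c k P k`.
At the zeros of `P k`, `Q` agrees with `P k'`, whose signs alternate, so `Q` has a zero strictly
between any two consecutive zeros of `P k`. Dividing `Q` by these `k - 1` factors leaves a linear
factor, and comparing signs at `x 0` (using `c k > 0`) puts its zero to the left of `x 0`.
So the zeros of `P (k + 1)` are `-b` together with `k` simple zeros interlacing those of `P k`.
-/

theorem Nat.strictMonoOn_Iio_of_lt_add_one {β : Type*} [Preorder β] {f : ℕ → β} {k : ℕ}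
    (hf : ∀ i, i + 1 < k → f i < f (i + 1)) : StrictMonoOn f (Set.Iio k) := by
  cases k with
  | zero => simp [StrictMonoOn]
  | succ n =>
    rw [← Order.succ_eq_add_one, Order.Iio_succ]
    exact strictMonoOn_Iic_of_lt_succ fun m hm => by simpa using hf m (by omega)

theorem Polynomial.exists_eval_eq_zero_Ioo {p : ℝ[X]} {u v : ℝ} (huv : u < v)
    (h : eval u p * eval v p < 0) : ∃ t ∈ Set.Ioo u v, eval t p = 0 := by
  have hcont := p.continuousOn (s := Set.Icc u v)
  rcases mul_neg_iff.mp h with ⟨hu, hv⟩ | ⟨hu, hv⟩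
  · exact intermediate_value_Ioo' huv.le hcont ⟨hv, hu⟩
  · exact intermediate_value_Ioo huv.le hcont ⟨hu, hv⟩

theorem Lagrange.nodal_dvd_of_eval_eq_zero {K ι : Type*} [Field K] {s : Finset ι} {v : ι → K}
    {p : K[X]} (hv : Set.InjOn v s) (hp : ∀ i ∈ s, eval (v i) p = 0) : nodal s v ∣ p :=
  Finset.prod_dvd_of_coprime
    (fun _ hi _ hj hij =>
      isCoprime_X_sub_C_of_isUnit_sub (sub_ne_zero.mpr (hv.ne hi hj hij)).isUnit)
    fun i hi => dvd_iff_isRoot.mpr (hp i hi)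

theorem Lagrange.exists_eq_nodal_mul_C_mul_X_add_C {K ι : Type*} [Field K] {s : Finset ι}
    {v : ι → K} {q : K[X]} (hv : Set.InjOn v s) (hq : q.natDegree = #s + 1)
    (hroot : ∀ i ∈ s, eval (v i) q = 0) :
    ∃ e, q = nodal s v * (C q.leadingCoeff * X + C e) := by
  obtain ⟨r, hr⟩ := nodal_dvd_of_eval_eq_zero hv hroot
  have hr0 : r ≠ 0 := by rintro rfl; simp [hr] at hq
  have hr_deg : r.natDegree = 1 := by
    rw [hr, natDegree_mul nodal_ne_zero hr0, natDegree_nodal] at hq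
    omega
  obtain ⟨d, hd, e, rfl⟩ := natDegree_eq_one.mp hr_deg
  have hlead : q.leadingCoeff = d := by
    rw [hr, leadingCoeff_mul, nodal_monic.leadingCoeff, leadingCoeff_linear hd, one_mul]
  exact ⟨e, hlead ▸ hr⟩

section DerivativeAddCMul

variable {R : Type*} [Semiring R] [NoZeroDivisors R] {p : R[X]} {c : R}

theorem Polynomial.degree_derivative_lt_degree_C_mul (hc : c ≠ 0) (hp : p ≠ 0) :
    (derivative p).degree < (C c * p).degree := by
  rw [degree_C_mul hc]
  exact degree_derivative_lt hp

theorem Polynomial.natDegree_derivative_add_C_mul (hc : c ≠ 0) :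
    (derivative p + C c * p).natDegree = p.natDegree := by
  rcases eq_or_ne p 0 with rfl | hp
  · simp
  rw [natDegree_add_eq_right_of_degree_lt (degree_derivative_lt_degree_C_mul hc hp),
    natDegree_C_mul hc]

theorem Polynomial.leadingCoeff_derivative_add_C_mul (hc : c ≠ 0) :
    (derivative p + C c * p).leadingCoeff = c * p.leadingCoeff := by
  rcases eq_or_ne p 0 with rfl | hp
  · simp
  rw [leadingCoeff_add_of_degree_lt (degree_derivative_lt_degree_C_mul hc hp), leadingCoeff_mul,
    leadingCoeff_C]

end DerivativeAddCMul

structure HasOrderedRoots (p : ℝ[X]) (k : ℕ) (x : ℕ → ℝ) : Prop where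
  strictMonoOn : StrictMonoOn x (Set.Iio k)
  ne_zero : p ≠ 0
  eq_C_mul_nodal : p = C p.leadingCoeff * nodal (range k) x

def Interlaces (y x : ℕ → ℝ) (k : ℕ) : Prop :=
  (∀ i < k, y i < x i) ∧ ∀ i, i + 1 < k → x i < y (i + 1)

theorem Interlaces.strictMonoOn {y x : ℕ → ℝ} {k : ℕ} (h : Interlaces y x k) :
    StrictMonoOn y (Set.Iio k) :=
  Nat.strictMonoOn_Iio_of_lt_add_one fun i hi => (h.1 i (by omega)).trans (h.2 i hi)

namespace HasOrderedRoots

variable {p : ℝ[X]} {k : ℕ} {x : ℕ → ℝ}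

theorem eval_eq_zero_iff (h : HasOrderedRoots p k x) {r : ℝ} :
    eval r p = 0 ↔ ∃ i < k, x i = r := by
  rw [h.eq_C_mul_nodal, eval_mul, eval_C, eval_nodal, mul_eq_zero, prod_eq_zero_iff]
  simp [leadingCoeff_ne_zero.mpr h.ne_zero, sub_eq_zero, eq_comm]

theorem eval_eq_zero (h : HasOrderedRoots p k x) {i : ℕ} (hi : i < k) : eval (x i) p = 0 :=
  h.eval_eq_zero_iff.mpr ⟨i, hi, rfl⟩

theorem natDegree_eq (h : HasOrderedRoots p k x) : p.natDegree = k := by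
  rw [h.eq_C_mul_nodal, natDegree_C_mul (leadingCoeff_ne_zero.mpr h.ne_zero), natDegree_nodal,
    card_range]

theorem of_eval_eq_zero (hp : p ≠ 0) (hdeg : p.natDegree = k) (hx : StrictMonoOn x (Set.Iio k))
    (hroot : ∀ i < k, eval (x i) p = 0) : HasOrderedRoots p k x := by
  refine ⟨hx, hp, ?_⟩
  obtain ⟨s, hs⟩ := nodal_dvd_of_eval_eq_zero (s := range k) (by rw [coe_range]; exact hx.injOn)
    fun i hi => hroot i (mem_range.mp hi)
  have hs0 : s ≠ 0 := by rintro rfl; simp_all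
  have hs_deg : s.natDegree = 0 := by
    have := congrArg natDegree hs
    rw [natDegree_mul nodal_ne_zero hs0, natDegree_nodal, card_range, hdeg] at this
    omega
  rw [hs, leadingCoeff_mul, nodal_monic.leadingCoeff, one_mul, eq_C_of_natDegree_eq_zero hs_deg,
    leadingCoeff_C, mul_comm]

theorem im_eq_zero_of_aeval_eq_zero (h : HasOrderedRoots p k x) {z : ℂ} (hz : aeval z p = 0) :
    z.im = 0 := by
  rw [h.eq_C_mul_nodal, nodal_eq] at hz
  simp only [map_mul, map_prod, map_sub, aeval_X, aeval_C, mul_eq_zero, prod_eq_zero_iff,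
    sub_eq_zero] at hz
  rcases hz with hL | ⟨i, -, rfl⟩
  · simp [leadingCoeff_ne_zero.mpr h.ne_zero] at hL
  · simp

theorem C_mul (h : HasOrderedRoots p k x) {a : ℝ} (ha : a ≠ 0) :
    HasOrderedRoots (C a * p) k x :=
  ⟨h.strictMonoOn, mul_ne_zero (C_ne_zero.mpr ha) h.ne_zero, by
    rw [leadingCoeff_mul, leadingCoeff_C, Polynomial.C_mul, mul_assoc, ← h.eq_C_mul_nodal]⟩

theorem mul_X_sub_C (h : HasOrderedRoots p k x) {t : ℝ} (ht : ∀ i < k, x i < t) :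
    HasOrderedRoots (p * (X - C t)) (k + 1) (Function.update x k t) := by
  refine ⟨?_, mul_ne_zero h.ne_zero (X_sub_C_ne_zero t), ?_⟩
  · refine Nat.strictMonoOn_Iio_of_lt_add_one fun i hi => ?_
    rcases Nat.lt_or_ge (i + 1) k with hik | hik
    · simpa [Function.update_of_ne (by omega : i ≠ k),
        Function.update_of_ne (by omega : i + 1 ≠ k)]
        using h.strictMonoOn (by simp; omega) (by simpa using hik) (by omega)
    · obtain rfl : i + 1 = k := by omega
      simpa [Function.update_of_ne (by omega : i ≠ i + 1)] using ht i (by omega)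
  · have hnodal : nodal (range k) (Function.update x k t) = nodal (range k) x :=
      prod_congr rfl fun i hi => by rw [Function.update_of_ne (mem_range.mp hi).ne]
    rw [leadingCoeff_mul_monic (monic_X_sub_C t), nodal_eq, prod_range_succ, ← nodal_eq, hnodal,
      Function.update_self, ← mul_assoc, ← h.eq_C_mul_nodal]

theorem eval_derivative (h : HasOrderedRoots p k x) {m : ℕ} (hm : m < k) :
    eval (x m) (derivative p) = p.leadingCoeff * ∏ j ∈ (range k).erase m, (x m - x j) := by
  rw [h.eq_C_mul_nodal, derivative_C_mul, eval_mul, eval_C, leadingCoeff_mul, leadingCoeff_C,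
    nodal_monic.leadingCoeff, mul_one, eval_nodal_derivative_eval_node_eq (mem_range.mpr hm),
    eval_nodal]

theorem eval_derivative_mul_eval_derivative_succ_neg (h : HasOrderedRoots p k x) {m : ℕ}
    (hm : m + 1 < k) : eval (x m) (derivative p) * eval (x (m + 1)) (derivative p) < 0 := by
  set s := ((range k).erase m).erase (m + 1)
  have hmono : ∀ {i j}, i < j → j < k → x i < x j := fun hij hj =>
    h.strictMonoOn (by simp; omega) (by simpa using hj) hij
  -- every other root lies on the same side of both `x m` and `x (m + 1)`
  have hs : 0 < ∏ j ∈ s, (x m - x j) * (x (m + 1) - x j) := by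
    refine prod_pos fun j hj => ?_
    simp only [s, mem_erase, mem_range] at hj
    rcases Nat.lt_or_gt_of_ne hj.2.1 with hjm | hjm
    · exact mul_pos (sub_pos.mpr (hmono hjm (by omega))) (sub_pos.mpr (hmono (by omega) hm))
    · exact mul_pos_of_neg_of_neg (sub_neg.mpr (hmono (by omega) hj.2.2))
        (sub_neg.mpr (hmono (by omega) hj.2.2))
  have hsplit_m :
      ∏ j ∈ (range k).erase m, (x m - x j) = (x m - x (m + 1)) * ∏ j ∈ s, (x m - x j) :=
    (mul_prod_erase _ _ (by simp; omega)).symm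
  have hsplit_succ : ∏ j ∈ (range k).erase (m + 1), (x (m + 1) - x j) =
      (x (m + 1) - x m) * ∏ j ∈ s, (x (m + 1) - x j) := by
    rw [← mul_prod_erase _ _ (by simp; omega : m ∈ (range k).erase (m + 1)), erase_right_comm]
  have hL := leadingCoeff_ne_zero.mpr h.ne_zero
  have hsub : 0 < x (m + 1) - x m := sub_pos.mpr (hmono (by omega) hm)
  rw [h.eval_derivative (by omega), h.eval_derivative hm, hsplit_m, hsplit_succ]
  have hpos : 0 < p.leadingCoeff ^ 2 * (x (m + 1) - x m) ^ 2 *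
      ∏ j ∈ s, (x m - x j) * (x (m + 1) - x j) :=
    mul_pos (by positivity) hs
  rw [prod_mul_distrib] at hpos
  linarith

variable {c : ℝ}

theorem exists_eval_derivative_add_C_mul_eq_zero_Ioo (h : HasOrderedRoots p k x) {m : ℕ}
    (hm : m + 1 < k) :
    ∃ t ∈ Set.Ioo (x m) (x (m + 1)), eval t (derivative p + C c * p) = 0 := by
  refine exists_eval_eq_zero_Ioo
    (h.strictMonoOn (by simp; omega) (by simpa using hm) (by omega)) ?_
  simpa [h.eval_eq_zero (by omega : m < k), h.eval_eq_zero hm] using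
    h.eval_derivative_mul_eval_derivative_succ_neg hm

theorem exists_eval_derivative_add_C_mul_eq_zero_lt {n : ℕ} (h : HasOrderedRoots p (n + 1) x)
    (hc : 0 < c) {f : ℕ → ℝ} (hf : ∀ m < n, f m ∈ Set.Ioo (x m) (x (m + 1)))
    (hf_root : ∀ m < n, eval (f m) (derivative p + C c * p) = 0) :
    ∃ y < x 0, eval y (derivative p + C c * p) = 0 := by
  set q := derivative p + C c * p
  have hL := leadingCoeff_ne_zero.mpr h.ne_zero
  have hq_deg : q.natDegree = #(range n) + 1 := by
    rw [natDegree_derivative_add_C_mul hc.ne', h.natDegree_eq, card_range]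
  have hf_mono : StrictMonoOn f (Set.Iio n) :=
    Nat.strictMonoOn_Iio_of_lt_add_one fun m hm => (hf m (by omega)).2.trans (hf (m + 1) hm).1
  obtain ⟨e, hq⟩ := exists_eq_nodal_mul_C_mul_X_add_C (by rw [coe_range]; exact hf_mono.injOn)
    hq_deg fun m hm => hf_root m (mem_range.mp hm)
  set d := q.leadingCoeff
  have hd : d = c * p.leadingCoeff := leadingCoeff_derivative_add_C_mul hc.ne'
  have hd0 : d ≠ 0 := hd ▸ mul_ne_zero hc.ne' hL
  refine ⟨-e / d, ?_, ?_⟩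
  · -- `A` and `B` have the same sign, while `q (x 0)` is both `L * A` and `B * (d * x 0 + e)`,
    -- where `L` is the leading coefficient of `p` and `d = c * L`.
    set A := ∏ i ∈ range n, (x 0 - x (i + 1))
    set B := ∏ i ∈ range n, (x 0 - f i)
    have hAB : 0 < A * B := by
      rw [← prod_mul_distrib]
      refine prod_pos fun i hi => mul_pos_of_neg_of_neg (sub_neg.mpr ?_) (sub_neg.mpr ?_)
      · exact h.strictMonoOn (by simp) (by simp at hi ⊢; omega) (by omega)
      · exact (h.strictMonoOn.monotoneOn (by simp) (by simp at hi ⊢; omega)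
          (Nat.zero_le i)).trans_lt (hf i (mem_range.mp hi)).1
    have hqA : eval (x 0) q = p.leadingCoeff * A := by
      have hq_x : eval (x 0) q = eval (x 0) (derivative p) := by
        simp [q, h.eval_eq_zero (by omega : 0 < n + 1)]
      rw [hq_x, h.eval_derivative (by omega), range_add_one', erase_insert (by simp), prod_map]
      rfl
    have hqB : eval (x 0) q = B * (d * x 0 + e) := by
      rw [hq, eval_mul, eval_nodal, eval_add, eval_mul, eval_C, eval_X, eval_C]
    have key : d * (d * x 0 + e) * B ^ 2 = c * p.leadingCoeff ^ 2 * (A * B) := by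
      linear_combination
        ((d * x 0 + e) * B ^ 2) * hd + (c * p.leadingCoeff * B) * (hqB.symm.trans hqA)
    have hdw : 0 < d * (d * x 0 + e) :=
      lt_of_mul_lt_mul_right (by rw [zero_mul, key]; positivity) (sq_nonneg B)
    have : x 0 - -e / d = d * (d * x 0 + e) / d ^ 2 := by field_simp; ring
    linarith [div_pos hdw (by positivity : 0 < d ^ 2)]
  · rw [hq, eval_mul, eval_add, eval_mul, eval_C, eval_X, eval_C, mul_div_cancel₀ _ hd0]
    ring

theorem exists_interlaces_derivative_add_C_mul (h : HasOrderedRoots p k x) (hc : 0 < c) :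
    ∃ y, HasOrderedRoots (derivative p + C c * p) k y ∧ Interlaces y x k := by
  have hq0 : derivative p + C c * p ≠ 0 := by
    rw [← leadingCoeff_ne_zero, leadingCoeff_derivative_add_C_mul hc.ne']
    exact mul_ne_zero hc.ne' (leadingCoeff_ne_zero.mpr h.ne_zero)
  have hq_deg := (natDegree_derivative_add_C_mul hc.ne').trans h.natDegree_eq
  suffices ∃ y, (∀ i < k, eval (y i) (derivative p + C c * p) = 0) ∧ Interlaces y x k by
    obtain ⟨y, hy_root, hy⟩ := this
    exact ⟨y, of_eval_eq_zero hq0 hq_deg hy.strictMonoOn hy_root, hy⟩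
  cases k with
  | zero => exact ⟨x, by simp, by simp [Interlaces]⟩
  | succ n =>
    choose! f hf hf_root using fun m (hm : m < n) =>
      h.exists_eval_derivative_add_C_mul_eq_zero_Ioo (c := c) (m := m) (by omega)
    obtain ⟨y₀, hy₀, hy₀_root⟩ :=
      h.exists_eval_derivative_add_C_mul_eq_zero_lt hc hf hf_root
    refine ⟨fun | 0 => y₀ | i + 1 => f i, ?_, ?_, fun i hi => (hf i (by omega)).1⟩
    · rintro (_ | i) hi
      exacts [hy₀_root, hf_root i (by omega)]
    · rintro (_ | i) hi
      exacts [hy₀, (hf i (by omega)).2]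

theorem existsUnique_eval_eq_zero_between {q : ℝ[X]} {z : ℕ → ℝ} {n : ℕ}
    (hp : HasOrderedRoots p (n + 1) z) (hq : HasOrderedRoots q n x) (hzx : Interlaces z x n)
    {r s : ℝ} (hrs : r < s) (hs_lt : s < z n) (hr : eval r p = 0) (hs : eval s p = 0)
    (hgap : ∀ u, eval u p = 0 → ¬(r < u ∧ u < s)) :
    ∃! t, eval t q = 0 ∧ r < t ∧ t < s := by
  obtain ⟨i, hi, rfl⟩ := hp.eval_eq_zero_iff.mp hr
  obtain ⟨j, hj, rfl⟩ := hp.eval_eq_zero_iff.mp hs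
  have hz_lt : ∀ {l m}, l < n + 1 → m < n + 1 → (z l < z m ↔ l < m) := fun hl hm =>
    hp.strictMonoOn.lt_iff_lt (by simpa using hl) (by simpa using hm)
  have hz_le : ∀ {l m}, l ≤ m → m < n + 1 → z l ≤ z m := fun hlm hm =>
    hp.strictMonoOn.monotoneOn (by simp; omega) (by simpa using hm) hlm
  have hij : i < j := (hz_lt hi hj).mp hrs
  have hjn : j < n := (hz_lt hj (by omega)).mp hs_lt
  obtain rfl : j = i + 1 := by
    by_contra hne
    exact hgap (z (i + 1)) (hp.eval_eq_zero (by omega))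
      ⟨(hz_lt hi (by omega)).mpr (by omega), (hz_lt (by omega) hj).mpr (by omega)⟩
  refine ⟨x i, ⟨hq.eval_eq_zero (by omega), hzx.1 i (by omega), hzx.2 i hjn⟩, ?_⟩
  rintro _ ⟨ht, hit, hti⟩
  obtain ⟨l, hl, rfl⟩ := hq.eval_eq_zero_iff.mp ht
  obtain rfl : l = i := by
    by_contra hne
    rcases Nat.lt_or_gt_of_ne hne with hli | hil
    · linarith [hzx.2 l (by omega), hz_le (by omega : l + 1 ≤ i) hi]
    · linarith [hzx.1 l hl, hz_le (by omega : i + 1 ≤ l) (by omega)]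
  rfl

theorem exists_interlaces_C_mul_X_add_C_mul {a b : ℝ} {n : ℕ} (h : HasOrderedRoots p n x)
    (hxb : ∀ i < n, x i ≤ -b) (ha : a ≠ 0) (hc : 0 < c) :
    ∃ z, HasOrderedRoots (C a * ((X + C b) * (derivative p + C c * p))) (n + 1) z ∧
      z n = -b ∧ (∀ i < n + 1, z i ≤ -b) ∧ Interlaces z x n := by
  obtain ⟨y, hy, hyx⟩ := h.exists_interlaces_derivative_add_C_mul hc
  have hyb : ∀ i < n, y i < -b := fun i hi => (hyx.1 i hi).trans_le (hxb i hi)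
  refine ⟨Function.update y n (-b), ?_, by simp, fun i hi => ?_, ?_⟩
  · rw [mul_comm (X + C b), ← sub_neg_eq_add X, ← C_neg]
    exact (hy.mul_X_sub_C hyb).C_mul ha
  · rcases Nat.lt_or_ge i n with hin | hin
    · simpa [Function.update_of_ne hin.ne] using (hyb i hin).le
    · simp [show i = n by omega]
  · refine ⟨fun i hi => ?_, fun i hi => ?_⟩
    · simpa [Function.update_of_ne hi.ne] using hyx.1 i hi
    · simpa [Function.update_of_ne (show i + 1 ≠ n by omega)] using hyx.2 i hi

end HasOrderedRoots

theorem exists_hasOrderedRoots_of_recurrence {P : ℕ → ℝ[X]} {a b : ℝ} {c : ℕ → ℝ}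
    (ha : a ≠ 0) (hc : ∀ k, 0 < c k) (hP0 : ∃ r : ℝ, r ≠ 0 ∧ P 0 = C r)
    (hrec : ∀ k, P (k + 1) = C a * ((X + C b) * (derivative (P k) + C (c k) * P k))) (n : ℕ) :
    ∃ x, HasOrderedRoots (P n) n x ∧ ∀ i < n, x i ≤ -b := by
  induction n with
  | zero =>
    obtain ⟨r, hr, hP⟩ := hP0
    exact ⟨0, .of_eval_eq_zero (by simp [hP, hr]) (by simp [hP]) (by simp [StrictMonoOn])
      (by simp), by simp⟩
  | succ n ih =>
    obtain ⟨x, hx, hxb⟩ := ih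
    obtain ⟨z, hz, -, hzb, -⟩ := hx.exists_interlaces_C_mul_X_add_C_mul hxb ha (hc n)
    exact ⟨z, hrec n ▸ hz, hzb⟩

theorem stmt_6_general (P : ℕ → ℝ[X]) (a b : ℝ) (c : ℕ → ℝ)
    (ha : a ≠ 0)
    (hc : ∀ k, 0 < c k)
    (hP0 : ∃ r : ℝ, r ≠ 0 ∧ P 0 = C r)
    (hrec : ∀ k, P (k + 1) = C a * ((X + C b) * (derivative (P k) + C (c k) * P k))) :
    ∀ k : ℕ, 1 ≤ k →
      -- all zeros of P k are real
      (∀ z : ℂ, aeval z (P k) = 0 → z.im = 0) ∧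
      -- −b is a zero of P k
      eval (-b) (P k) = 0 ∧
      -- all other zeros are strictly less than −b
      (∀ r : ℝ, eval r (P k) = 0 → r = -b ∨ r < -b) ∧
      -- zeros of P (k-1) strictly interlace those of P k away from −b:
      -- between any two consecutive zeros of P k below −b lies exactly one zero of P (k-1)
      (∀ r s : ℝ, r < s → s < -b →
        eval r (P k) = 0 → eval s (P k) = 0 →
        (∀ u : ℝ, eval u (P k) = 0 → ¬(r < u ∧ u < s)) →
        ∃! t : ℝ, eval t (P (k - 1)) = 0 ∧ r < t ∧ t < s) := by
  intro k hk
  obtain ⟨n, rfl⟩ : ∃ n, k = n + 1 := ⟨k - 1, by omega⟩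
  obtain ⟨x, hx, hxb⟩ := exists_hasOrderedRoots_of_recurrence ha hc hP0 hrec n
  obtain ⟨z, hz, hzn, hzb, hzx⟩ := hx.exists_interlaces_C_mul_X_add_C_mul hxb ha (hc n)
  rw [← hrec n] at hz
  refine ⟨fun w hw => hz.im_eq_zero_of_aeval_eq_zero hw, hzn ▸ hz.eval_eq_zero n.lt_succ_self,
    fun r hr => ?_, fun r s hrs hsb hr hs hgap => ?_⟩
  · obtain ⟨i, hi, rfl⟩ := hz.eval_eq_zero_iff.mp hr
    exact (hzb i hi).eq_or_lt
  · exact hz.existsUnique_eval_eq_zero_between hx hzx hrs (hzn ▸ hsb) hr hs hgap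

theorem stmt_6 (P : ℕ → ℝ[X]) (a b : ℝ) (c : ℕ → ℝ)
    (ha : a ≠ 0) (hb : 0 ≤ b)
    (hc : ∀ k, 0 < c k) (hcmono : ∀ k, c k ≤ c (k + 1))
    (hdeg : ∀ k, (P k).natDegree = k)
    (hP0 : ∃ r : ℝ, r ≠ 0 ∧ P 0 = C r)
    (hrec : ∀ k, P (k + 1) = C a * ((X + C b) * (derivative (P k) + C (c k) * P k))) :
    ∀ k : ℕ, 1 ≤ k →
      -- all zeros of P k are real
      (∀ z : ℂ, aeval z (P k) = 0 → z.im = 0) ∧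
      -- −b is a zero of P k
      eval (-b) (P k) = 0 ∧
      -- all other zeros are strictly less than −b
      (∀ r : ℝ, eval r (P k) = 0 → r = -b ∨ r < -b) ∧
      -- zeros of P (k-1) strictly interlace those of P k away from −b:
      -- between any two consecutive zeros of P k below −b lies exactly one zero of P (k-1)
      (∀ r s : ℝ, r < s → s < -b →
        eval r (P k) = 0 → eval s (P k) = 0 →
        (∀ u : ℝ, eval u (P k) = 0 → ¬(r < u ∧ u < s)) →
        ∃! t : ℝ, eval t (P (k - 1)) = 0 ∧ r < t ∧ t < s) :=
  stmt_6_general P a b c ha hc hP0 hrec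
end

section
/- Let Q be a real polynomial of degree n with only simple real zeros, all strictly less than −b, and let c > 0. Then the polynomial R(x) = (x+b)Q'(x) + (1 + c(x+b))Q(x) has only simple real zeros, all strictly less than −b, and the zeros of R strictly interlace those of Q together with −b. -/
/-!
Put `P = (X + b) Q`, so that `R = P' + c P` and `e^{cx} R(x) = (e^{cx} P(x))'`. The polynomial `P`
has `deg P` simple real zeros, the largest being `-b`. Rolle's theorem applied to `e^{cx} P` gives
a zero of `R` strictly between any two zeros of `P`, and one below the smallest zero of `P`,
because `e^{cx} P(x) → 0` as `x → -∞`. Sending each zero `s` of `P` to the largest zero of `R`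
below `s` is therefore injective; as `deg R = deg P`, it is a bijection onto the zeros of `R`,
which forces all zeros of `R` to be real and simple and to interlace those of `P`.
-/

open Polynomial Filter Real Set
open scoped Topology Finset

namespace Polynomial

theorem splits_of_forall_im_eq_zero {p : ℝ[X]} (h : ∀ z : ℂ, aeval z p = 0 → z.im = 0) :
    p.Splits := by
  refine Splits.of_splits_map (algebraMap ℝ ℂ) (IsAlgClosed.splits _) fun z hz => ?_
  have him : z.im = 0 := h z <| by
    rw [aeval_def, eval₂_eq_eval_map]
    exact (mem_roots'.1 hz).2
  exact ⟨z.re, Complex.ext (by simp) (by simp [him])⟩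

theorem Splits.im_eq_zero {p : ℝ[X]} (hp : p.Splits) (hp0 : p ≠ 0) {z : ℂ}
    (hz : aeval z p = 0) : z.im = 0 := by
  obtain ⟨r, rfl⟩ := hp.mem_range_of_isRoot hp0 (i := algebraMap ℝ ℂ) <| by
    rwa [IsRoot, ← eval₂_eq_eval_map, ← aeval_def]
  simp

variable {K : Type*} [Field K]

theorem mem_roots_toFinset_iff [DecidableEq K] {p : K[X]} (hp : p ≠ 0) {x : K} :
    x ∈ p.roots.toFinset ↔ eval x p = 0 := by
  rw [Multiset.mem_toFinset, mem_roots hp, IsRoot.def]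

theorem nodup_roots_iff_forall_eval_derivative_ne_zero {p : K[X]} (hp : p ≠ 0) :
    p.roots.Nodup ↔ ∀ r, eval r p = 0 → eval r (derivative p) ≠ 0 := by
  classical
  simp only [Multiset.nodup_iff_count_le_one, count_roots, ← not_lt,
    one_lt_rootMultiplicity_iff_isRoot hp, IsRoot, not_and]

theorem nodup_roots_X_add_C_mul {q : K[X]} {b : K} (hq : q.roots.Nodup) (hb : eval (-b) q ≠ 0) :
    ((X + C b) * q).roots.Nodup := by
  rcases eq_or_ne q 0 with rfl | hq0
  · simp
  rw [roots_mul (mul_ne_zero (X_add_C_ne_zero b) hq0), roots_X_add_C, Multiset.singleton_add,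
    Multiset.nodup_cons]
  exact ⟨fun h => hb (isRoot_of_mem_roots h), hq⟩

theorem card_roots_toFinset_X_add_C_mul [DecidableEq K] {q : K[X]} {b : K} (hq : q.Splits)
    (hq' : q.roots.Nodup) (hb : eval (-b) q ≠ 0) :
    #((X + C b) * q).roots.toFinset = ((X + C b) * q).natDegree := by
  rw [Multiset.toFinset_card_of_nodup (nodup_roots_X_add_C_mul hq' hb),
    ((Splits.X_add_C b).mul hq).natDegree_eq_card_roots]

theorem nodup_roots_and_splits_of_natDegree_le_card [DecidableEq K] {p : K[X]}
    (h : p.natDegree ≤ #p.roots.toFinset) : p.roots.Nodup ∧ p.Splits := by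
  have h₁ := Multiset.toFinset_card_le p.roots
  have h₂ := card_roots' p
  exact ⟨Multiset.toFinset_card_eq_card_iff_nodup.1 (by omega),
    splits_iff_card_roots.2 (by omega)⟩

theorem natDegree_derivative_add_C_mul_s7 (p : K[X]) {c : K} (hc : c ≠ 0) :
    (derivative p + C c * p).natDegree = p.natDegree := by
  rcases eq_or_ne p.natDegree 0 with h | h
  · simp [derivative_of_natDegree_zero h, natDegree_C_mul hc, h]
  · rw [natDegree_add_eq_right_of_natDegree_lt
      (by rw [natDegree_C_mul hc]; exact natDegree_derivative_lt h), natDegree_C_mul hc]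

theorem derivative_add_C_mul_ne_zero {p : K[X]} (hp : p ≠ 0) {c : K} (hc : c ≠ 0) :
    derivative p + C c * p ≠ 0 := by
  intro h
  have hdeg := natDegree_derivative_add_C_mul_s7 p hc
  rw [h, natDegree_zero] at hdeg
  rw [derivative_of_natDegree_zero hdeg.symm, zero_add] at h
  simp [hc, hp] at h

end Polynomial

section Interlacing

variable {α : Type*} [LinearOrder α]

structure IsInterlacingMap (S Z : Finset α) (g : α → α) : Prop where
  mapsTo : Set.MapsTo g S Z
  apply_lt : ∀ s ∈ S, g s < s
  lt_apply_of_lt : ∀ s ∈ S, ∀ t ∈ S, s < t → s < g t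

theorem exists_isInterlacingMap {S Z : Finset α} (hbelow : ∀ s ∈ S, ∃ z ∈ Z, z < s)
    (hbetween : ∀ s ∈ S, ∀ t ∈ S, s < t → ∃ z ∈ Z, s < z ∧ z < t) :
    ∃ g, IsInterlacingMap S Z g := by
  have hmax : ∀ s ∈ S, ∃ z ∈ Z, z < s ∧ ∀ z' ∈ Z, z' < s → z' ≤ z := by
    intro s hs
    obtain ⟨z, hz, hzs⟩ := hbelow s hs
    obtain ⟨w, hw, hwmax⟩ := (Z.filter (· < s)).exists_max_image id ⟨z, by simp [hz, hzs]⟩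
    rw [Finset.mem_filter] at hw
    exact ⟨w, hw.1, hw.2, fun z' hz' hz's => hwmax z' (by simp [hz', hz's])⟩
  choose! g hgZ hgs hgmax using hmax
  refine ⟨g, hgZ, hgs, fun s hs t ht hst => ?_⟩
  obtain ⟨z, hz, hsz, hzt⟩ := hbetween s hs t ht hst
  exact hsz.trans_le (hgmax t ht z hz hzt)

namespace IsInterlacingMap

variable {S Z : Finset α} {g : α → α}

theorem strictMonoOn (hg : IsInterlacingMap S Z g) : StrictMonoOn g S :=
  fun s hs t ht hst => (hg.apply_lt s hs).trans (hg.lt_apply_of_lt s hs t ht hst)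

theorem surjOn (hg : IsInterlacingMap S Z g) (hcard : #Z ≤ #S) : Set.SurjOn g S Z :=
  Finset.surjOn_of_injOn_of_card_le g hg.mapsTo hg.strictMonoOn.injOn hcard

theorem card_eq (hg : IsInterlacingMap S Z g) (hcard : #Z ≤ #S) : #Z = #S :=
  hcard.antisymm (Finset.card_le_card_of_injOn g hg.mapsTo hg.strictMonoOn.injOn)

theorem exists_gt (hg : IsInterlacingMap S Z g) (hcard : #Z ≤ #S) {z : α} (hz : z ∈ Z) :
    ∃ s ∈ S, z < s := by
  obtain ⟨s, hs, rfl⟩ := hg.surjOn hcard hz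
  exact ⟨s, hs, hg.apply_lt s hs⟩

theorem existsUnique_target_between_consecutive (hg : IsInterlacingMap S Z g)
    (hcard : #Z ≤ #S) {s t : α} (hs : s ∈ S) (ht : t ∈ S) (hst : s < t)
    (hgap : ∀ u ∈ S, ¬(s < u ∧ u < t)) : ∃! z, z ∈ Z ∧ s < z ∧ z < t := by
  refine ⟨g t, ⟨hg.mapsTo ht, hg.lt_apply_of_lt s hs t ht hst, hg.apply_lt t ht⟩, ?_⟩
  rintro z ⟨hz, hsz, hzt⟩
  obtain ⟨u, hu, rfl⟩ := hg.surjOn hcard hz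
  rcases lt_trichotomy u t with hut | rfl | htu
  · exact absurd ⟨hsz.trans (hg.apply_lt u hu), hut⟩ (hgap u hu)
  · rfl
  · exact absurd (hg.lt_apply_of_lt t ht u hu htu) hzt.not_gt

theorem existsUnique_source_between_consecutive (hg : IsInterlacingMap S Z g)
    (hcard : #Z ≤ #S) {z w : α} (hz : z ∈ Z) (hw : w ∈ Z) (hzw : z < w)
    (hgap : ∀ u ∈ Z, ¬(z < u ∧ u < w)) : ∃! s, s ∈ S ∧ z < s ∧ s < w := by
  obtain ⟨u, hu, rfl⟩ := hg.surjOn hcard hz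
  obtain ⟨v, hv, rfl⟩ := hg.surjOn hcard hw
  have huv : u < v := (hg.strictMonoOn.lt_iff_lt hu hv).1 hzw
  refine ⟨u, ⟨hu, hg.apply_lt u hu, hg.lt_apply_of_lt u hu v hv huv⟩, ?_⟩
  rintro s ⟨hs, hus, hsv⟩
  rcases lt_trichotomy s u with hsu | rfl | hsu
  · exact absurd (hg.lt_apply_of_lt s hs u hu hsu) hus.not_gt
  · rfl
  · exact absurd ⟨(hg.apply_lt u hu).trans (hg.lt_apply_of_lt u hu s hs hsu),
      (hg.apply_lt s hs).trans hsv⟩ (hgap (g s) (hg.mapsTo hs))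

end IsInterlacingMap

end Interlacing

theorem exists_hasDerivAt_eq_zero_of_tendsto_atBot {f f' : ℝ → ℝ} {b l : ℝ}
    (hf : Tendsto f atBot (𝓝 l)) (hfb : Tendsto f (𝓝[<] b) (𝓝 l))
    (hff' : ∀ x < b, HasDerivAt f (f' x) x) : ∃ x < b, f' x = 0 := by
  have h₀ : Tendsto (f ∘ log) (𝓝[>] 0) (𝓝 l) := by
    rw [← tendsto_comp_exp_atBot]
    simpa [Function.comp_def] using hf
  have hlog : Tendsto log (𝓝[<] exp b) (𝓝[<] b) := by
    refine tendsto_nhdsWithin_of_tendsto_nhds_of_eventually_within _ ?_ ?_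
    · simpa using ((continuousAt_log (exp_pos b).ne').tendsto).mono_left nhdsWithin_le_nhds
    · filter_upwards [Ioo_mem_nhdsLT (exp_pos b)] with t ht
      exact (log_lt_iff_lt_exp ht.1).2 ht.2
  obtain ⟨t, ht, h⟩ := exists_hasDerivAt_eq_zero' (exp_pos b) h₀ (hfb.comp hlog)
    fun t ht => (hff' (log t) ((log_lt_iff_lt_exp ht.1).2 ht.2)).comp t
      (hasDerivAt_log ht.1.ne')
  exact ⟨log t, (log_lt_iff_lt_exp ht.1).2 ht.2, by simpa [ht.1.ne'] using h⟩

namespace Polynomial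

theorem tendsto_exp_mul_eval_atBot (p : ℝ[X]) {c : ℝ} (hc : 0 < c) :
    Tendsto (fun x => exp (c * x) * eval x p) atBot (𝓝 0) := by
  have h := (p.comp (C (-c⁻¹) * X)).tendsto_div_exp_atTop.comp
    (tendsto_neg_atBot_atTop.const_mul_atTop hc)
  refine h.congr fun x => ?_
  have hx : -c⁻¹ * (c * -x) = x := by field_simp
  rw [Function.comp_apply, eval_comp, eval_mul, eval_C, eval_X, hx, mul_neg, exp_neg,
    div_inv_eq_mul, mul_comm]

theorem hasDerivAt_exp_mul_eval (p : ℝ[X]) (c x : ℝ) :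
    HasDerivAt (fun x => exp (c * x) * eval x p)
      (exp (c * x) * eval x (derivative p + C c * p)) x := by
  refine (((hasDerivAt_id x).const_mul c).exp.mul (p.hasDerivAt x)).congr_deriv ?_
  simp only [id, eval_add, eval_mul, eval_C]
  ring

theorem exists_mem_Ioo_eval_derivative_add_C_mul_eq_zero (p : ℝ[X]) (c : ℝ) {s t : ℝ}
    (hst : s < t) (hs : eval s p = 0) (ht : eval t p = 0) :
    ∃ r ∈ Ioo s t, eval r (derivative p + C c * p) = 0 := by
  obtain ⟨r, hr, h⟩ := exists_hasDerivAt_eq_zero hst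
    (fun x _ => (p.hasDerivAt_exp_mul_eval c x).continuousAt.continuousWithinAt)
    (by simp [hs, ht]) fun x _ => p.hasDerivAt_exp_mul_eval c x
  exact ⟨r, hr, by simpa [(exp_pos _).ne'] using h⟩

theorem exists_lt_eval_derivative_add_C_mul_eq_zero (p : ℝ[X]) {c m : ℝ} (hc : 0 < c)
    (hm : eval m p = 0) : ∃ r < m, eval r (derivative p + C c * p) = 0 := by
  have hcont := (p.hasDerivAt_exp_mul_eval c m).continuousAt.tendsto.mono_left
    (nhdsWithin_le_nhds (s := Iio m))
  obtain ⟨r, hr, h⟩ := exists_hasDerivAt_eq_zero_of_tendsto_atBot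
    (p.tendsto_exp_mul_eval_atBot hc) (by simpa [hm] using hcont)
    fun x _ => p.hasDerivAt_exp_mul_eval c x
  exact ⟨r, hr, by simpa [(exp_pos _).ne'] using h⟩

theorem exists_isInterlacingMap_roots_derivative_add_C_mul {p : ℝ[X]} (hp : p ≠ 0) {c : ℝ}
    (hc : 0 < c) :
    ∃ g, IsInterlacingMap p.roots.toFinset (derivative p + C c * p).roots.toFinset g := by
  have hR := derivative_add_C_mul_ne_zero hp hc.ne'
  refine exists_isInterlacingMap (fun s hs => ?_) fun s hs t ht hst => ?_
  · obtain ⟨r, hr, h⟩ := p.exists_lt_eval_derivative_add_C_mul_eq_zero hc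
      ((mem_roots_toFinset_iff hp).1 hs)
    exact ⟨r, (mem_roots_toFinset_iff hR).2 h, hr⟩
  · obtain ⟨r, hr, h⟩ := p.exists_mem_Ioo_eval_derivative_add_C_mul_eq_zero c hst
      ((mem_roots_toFinset_iff hp).1 hs) ((mem_roots_toFinset_iff hp).1 ht)
    exact ⟨r, (mem_roots_toFinset_iff hR).2 h, hr⟩

end Polynomial

theorem stmt_7_general (b c : ℝ) (hc : 0 < c) (Q : ℝ[X])
    (hQ0 : Q ≠ 0)
    -- Q has only real zeros
    (hQreal : ∀ z : ℂ, aeval z Q = 0 → z.im = 0)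
    -- the zeros of Q are simple
    (hQsimple : ∀ r : ℝ, eval r Q = 0 → eval r (derivative Q) ≠ 0)
    -- all zeros of Q are strictly less than −b
    (hQlt : ∀ r : ℝ, eval r Q = 0 → r < -b)
    (R : ℝ[X])
    (hR : R = (X + C b) * derivative Q + (1 + C c * (X + C b)) * Q) :
    -- R has only real zeros
    (∀ z : ℂ, aeval z R = 0 → z.im = 0) ∧
    -- the zeros of R are simple
    (∀ r : ℝ, eval r R = 0 → eval r (derivative R) ≠ 0) ∧
    -- all zeros of R are strictly less than −b
    (∀ r : ℝ, eval r R = 0 → r < -b) ∧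
    -- the zeros of R strictly interlace those of Q together with −b:
    -- between consecutive points of {zeros of Q} ∪ {−b} there is exactly one zero of R,
    (∀ s t : ℝ, s < t →
      (eval s Q = 0 ∨ s = -b) → (eval t Q = 0 ∨ t = -b) →
      (∀ u : ℝ, (eval u Q = 0 ∨ u = -b) → ¬(s < u ∧ u < t)) →
      ∃! r : ℝ, eval r R = 0 ∧ s < r ∧ r < t) ∧
    -- and between consecutive zeros of R there is exactly one point of {zeros of Q} ∪ {−b}
    (∀ s t : ℝ, s < t → eval s R = 0 → eval t R = 0 →
      (∀ u : ℝ, eval u R = 0 → ¬(s < u ∧ u < t)) →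
      ∃! r : ℝ, (eval r Q = 0 ∨ r = -b) ∧ s < r ∧ r < t) := by
  set P : ℝ[X] := (X + C b) * Q with hP
  obtain rfl : R = derivative P + C c * P := by
    rw [hR, hP, derivative_mul]
    simp only [derivative_add, derivative_X, derivative_C, add_zero]
    ring
  have hP0 : P ≠ 0 := mul_ne_zero (X_add_C_ne_zero b) hQ0
  have hR0 := derivative_add_C_mul_ne_zero hP0 hc.ne'
  have hS (x : ℝ) : x ∈ P.roots.toFinset ↔ eval x Q = 0 ∨ x = -b := by
    rw [mem_roots_toFinset_iff hP0, hP, eval_mul, mul_eq_zero, eval_add, eval_X, eval_C,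
      ← eq_neg_iff_add_eq_zero, or_comm]
  have hZ (x : ℝ) := mem_roots_toFinset_iff hR0 (x := x)
  have hScard : #P.roots.toFinset = P.natDegree := card_roots_toFinset_X_add_C_mul
    (splits_of_forall_im_eq_zero hQreal)
    ((nodup_roots_iff_forall_eval_derivative_ne_zero hQ0).2 hQsimple) fun h => (hQlt _ h).false
  have hRdeg := P.natDegree_derivative_add_C_mul_s7 hc.ne'
  have hcard : #(derivative P + C c * P).roots.toFinset ≤ #P.roots.toFinset :=
    (Multiset.toFinset_card_le _).trans ((card_roots' _).trans (hRdeg.trans hScard.symm).le)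
  obtain ⟨g, hg⟩ := exists_isInterlacingMap_roots_derivative_add_C_mul hP0 hc
  obtain ⟨hRnodup, hRsplits⟩ := nodup_roots_and_splits_of_natDegree_le_card
    (hRdeg.trans (hScard.symm.trans (hg.card_eq hcard).symm)).le
  refine ⟨fun z hz => hRsplits.im_eq_zero hR0 hz,
    (nodup_roots_iff_forall_eval_derivative_ne_zero hR0).1 hRnodup, fun r hr => ?_,
    fun s t hst hs ht hgap => ?_, fun z w hzw hz hw hgap => ?_⟩
  · obtain ⟨s, hs, hrs⟩ := hg.exists_gt hcard ((hZ r).2 hr)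
    exact hrs.trans_le (((hS s).1 hs).elim (fun h => (hQlt s h).le) le_of_eq)
  · simpa only [hZ] using hg.existsUnique_target_between_consecutive hcard ((hS s).2 hs)
      ((hS t).2 ht) hst (by simpa only [hS] using hgap)
  · simpa only [hS] using hg.existsUnique_source_between_consecutive hcard ((hZ z).2 hz)
      ((hZ w).2 hw) hzw (by simpa only [hZ] using hgap)

theorem stmt_7 (n : ℕ) (b c : ℝ) (hc : 0 < c) (Q : ℝ[X])
    (hQdeg : Q.natDegree = n) (hQ0 : Q ≠ 0)
    -- Q has only real zeros
    (hQreal : ∀ z : ℂ, aeval z Q = 0 → z.im = 0)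
    -- the zeros of Q are simple
    (hQsimple : ∀ r : ℝ, eval r Q = 0 → eval r (derivative Q) ≠ 0)
    -- all zeros of Q are strictly less than −b
    (hQlt : ∀ r : ℝ, eval r Q = 0 → r < -b)
    (R : ℝ[X])
    (hR : R = (X + C b) * derivative Q + (1 + C c * (X + C b)) * Q) :
    -- R has only real zeros
    (∀ z : ℂ, aeval z R = 0 → z.im = 0) ∧
    -- the zeros of R are simple
    (∀ r : ℝ, eval r R = 0 → eval r (derivative R) ≠ 0) ∧
    -- all zeros of R are strictly less than −b
    (∀ r : ℝ, eval r R = 0 → r < -b) ∧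
    -- the zeros of R strictly interlace those of Q together with −b:
    -- between consecutive points of {zeros of Q} ∪ {−b} there is exactly one zero of R,
    (∀ s t : ℝ, s < t →
      (eval s Q = 0 ∨ s = -b) → (eval t Q = 0 ∨ t = -b) →
      (∀ u : ℝ, (eval u Q = 0 ∨ u = -b) → ¬(s < u ∧ u < t)) →
      ∃! r : ℝ, eval r R = 0 ∧ s < r ∧ r < t) ∧
    -- and between consecutive zeros of R there is exactly one point of {zeros of Q} ∪ {−b}
    (∀ s t : ℝ, s < t → eval s R = 0 → eval t R = 0 →
      (∀ u : ℝ, eval u R = 0 → ¬(s < u ∧ u < t)) →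
      ∃! r : ℝ, (eval r Q = 0 ∨ r = -b) ∧ s < r ∧ r < t) :=
  stmt_7_general b c hc Q hQ0 hQreal hQsimple hQlt R hR
end

section
/- Let {P_k} be real polynomials with deg P_k = k, P_0 a non-zero constant, satisfying P_{k+1}(x) = c(−a·x·P_k(x) + b·P_k(x) + P_k'(x)) for all k, where a > 0 and b, c ∈ ℝ with c ≠ 0. Then for each k ≥ 1, P_k has k distinct real zeros, and the zeros of P_{k-1} strictly interlace those of P_k. -/
/-!
Put `g = e^{-a x²/2 + b x} P_{k-1}`. Then `P_k = c e^{a x²/2 - b x} g'`, and `g` vanishes at the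
zeros of `P_{k-1}` and at `±∞`. By Rolle's theorem `P_k` has a zero in each of the `k + 1` gaps
cut out by the `k` simple zeros of `P_{k-1}` (the two unbounded gaps included); as
`deg P_k = k + 1` these are all its zeros, and counting them forces the interlacing.
-/

open Finset Polynomial Filter Real Set Topology

section Rolle

variable {f f' : ℝ → ℝ} {l : ℝ}

/-- Reparametrising by `tan` reduces Rolle's theorem on unbounded intervals to bounded ones. -/
theorem exists_hasDerivAt_tan_eq_zero (hf : ∀ x, HasDerivAt f (f' x) x) {u v : ℝ} (huv : u < v)
    (hu : -(π / 2) ≤ u) (hv : v ≤ π / 2) (hfu : Tendsto (f ∘ tan) (𝓝[>] u) (𝓝 l))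
    (hfv : Tendsto (f ∘ tan) (𝓝[<] v) (𝓝 l)) : ∃ c ∈ Ioo u v, f' (tan c) = 0 := by
  have hcos : ∀ c ∈ Ioo u v, cos c ≠ 0 := fun c hc =>
    (cos_pos_of_mem_Ioo ⟨hu.trans_lt hc.1, hc.2.trans_le hv⟩).ne'
  obtain ⟨c, hc, hc0⟩ := exists_hasDerivAt_eq_zero' huv hfu hfv fun c hc =>
    (hf (tan c)).comp c (hasDerivAt_tan (hcos c hc))
  exact ⟨c, hc, by simpa [hcos c hc] using hc0⟩

theorem exists_hasDerivAt_eq_zero_of_tendsto_atBot_atTop (hf : ∀ x, HasDerivAt f (f' x) x)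
    (hbot : Tendsto f atBot (𝓝 l)) (htop : Tendsto f atTop (𝓝 l)) : ∃ c, f' c = 0 := by
  obtain ⟨c, -, hc⟩ := exists_hasDerivAt_tan_eq_zero hf (by linarith [pi_pos]) le_rfl le_rfl
    (hbot.comp tendsto_tan_neg_pi_div_two) (htop.comp tendsto_tan_pi_div_two)
  exact ⟨_, hc⟩

theorem exists_lt_hasDerivAt_eq_zero_of_tendsto_atBot (hf : ∀ x, HasDerivAt f (f' x) x) {r : ℝ}
    (hbot : Tendsto f atBot (𝓝 (f r))) : ∃ c < r, f' c = 0 := by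
  have hg : ∀ x, HasDerivAt (fun y => f (r + y)) (f' (r + x)) x := fun x =>
    (hf (r + x)).comp_const_add r x
  have hg0 : Tendsto ((fun y => f (r + y)) ∘ tan) (𝓝[<] 0) (𝓝 (f r)) := by
    have := ((hg 0).continuousAt.comp_of_eq (continuousAt_tan.2 (by simp)) tan_zero).tendsto
    simpa using this.mono_left nhdsWithin_le_nhds
  obtain ⟨c, hc, hc0⟩ := exists_hasDerivAt_tan_eq_zero hg (by linarith [pi_pos]) le_rfl
    (by linarith [pi_pos])
    (hbot.comp (tendsto_atBot_add_const_left _ r tendsto_tan_neg_pi_div_two)) hg0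
  exact ⟨r + tan c, by linarith [tan_neg_of_neg_of_pi_div_two_lt hc.2 hc.1], hc0⟩

theorem exists_gt_hasDerivAt_eq_zero_of_tendsto_atTop (hf : ∀ x, HasDerivAt f (f' x) x) {r : ℝ}
    (htop : Tendsto f atTop (𝓝 (f r))) : ∃ c > r, f' c = 0 := by
  have hg : ∀ x, HasDerivAt (fun y => f (-y)) (-f' (-x)) x := fun x => by
    simpa [Function.comp_def] using (hf (-x)).comp x (hasDerivAt_neg x)
  obtain ⟨c, hc, hc0⟩ := exists_lt_hasDerivAt_eq_zero_of_tendsto_atBot hg (r := -r)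
    (by simpa [Function.comp_def] using htop.comp tendsto_neg_atBot_atTop)
  exact ⟨-c, by linarith, by simpa using hc0⟩

end Rolle

theorem card_filter_lt_card_filter {α : Type*} {s : Finset α} {p q : α → Prop} [DecidablePred p]
    [DecidablePred q] (hpq : ∀ x, p x → q x) {a : α} (ha : a ∈ s) (hpa : ¬ p a) (hqa : q a) :
    #{x ∈ s | p x} < #{x ∈ s | q x} :=
  card_lt_card <| (Finset.ssubset_iff_of_subset (monotone_filter_right s fun x _ => hpq x)).2
    ⟨a, mem_filter.2 ⟨ha, hqa⟩, fun h => hpa (mem_filter.1 h).2⟩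

section LinearOrder

variable {α : Type*} [LinearOrder α]

/-- `T` meets every gap of `R`, the two unbounded ones included: one half of strict interlacing. -/
structure Separates (T R : Finset α) : Prop where
  exists_lt : ∀ r ∈ R, ∃ t ∈ T, t < r
  exists_gt : ∀ r ∈ R, ∃ t ∈ T, r < t
  exists_between : ∀ r ∈ R, ∀ r' ∈ R, r < r' → ∃ t ∈ T, r < t ∧ t < r'

namespace Separates

variable {T R : Finset α}

theorem dual (h : Separates T R) : Separates (α := αᵒᵈ) T R where
  exists_lt := h.exists_gt
  exists_gt := h.exists_lt
  exists_between r hr r' hr' hrr' := by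
    obtain ⟨t, ht, h1, h2⟩ := h.exists_between r' hr' r hr hrr'
    exact ⟨t, ht, h2, h1⟩

theorem exists_lt_forall_lt (h : Separates T R) {r : α} (hr : r ∈ R) :
    ∃ t ∈ T, t < r ∧ ∀ r' ∈ R, r' < r → r' < t := by
  by_cases hL : ({r' ∈ R | r' < r} : Finset α).Nonempty
  · obtain ⟨hm, hmr⟩ := mem_filter.1 (max'_mem _ hL)
    obtain ⟨t, ht, hmt, htr⟩ := h.exists_between _ hm r hr hmr
    exact ⟨t, ht, htr, fun r' hr' hr'r => (le_max' _ r' (mem_filter.2 ⟨hr', hr'r⟩)).trans_lt hmt⟩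
  · obtain ⟨t, ht, htr⟩ := h.exists_lt r hr
    exact ⟨t, ht, htr, fun r' hr' hr'r => absurd ⟨r', mem_filter.2 ⟨hr', hr'r⟩⟩ hL⟩

/-- Sending `r ∈ R` to a point of `T` between `r` and its predecessor in `R` is injective. -/
theorem card_filter_le_le_card_filter_lt (h : Separates T R) (x : α) :
    #{r ∈ R | r ≤ x} ≤ #{t ∈ T | t < x} := by
  choose! f hfT hflt hfgt using fun r (hr : r ∈ R) => h.exists_lt_forall_lt hr
  refine card_le_card_of_injOn f (fun r hr => ?_) fun r hr r' hr' hrr' => ?_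
  · obtain ⟨hrR, hrx⟩ := mem_filter.1 hr
    exact mem_filter.2 ⟨hfT r hrR, (hflt r hrR).trans_le hrx⟩
  · have hrR := (mem_filter.1 hr).1
    have hr'R := (mem_filter.1 hr').1
    by_contra hne
    rcases lt_or_gt_of_ne hne with hlt | hlt
    · exact (hflt r hrR).not_gt (hrr' ▸ hfgt r' hr'R r hrR hlt)
    · exact (hflt r' hr'R).not_gt (hrr' ▸ hfgt r hrR r' hr'R hlt)

theorem card_filter_ge_le_card_filter_gt (h : Separates T R) (x : α) :
    #{r ∈ R | x ≤ r} ≤ #{t ∈ T | x < t} :=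
  h.dual.card_filter_le_le_card_filter_lt (α := αᵒᵈ) x

theorem card_le_card_filter_lt_add_card_filter_gt (h : Separates T R) {r s : α}
    (hR : ∀ ρ ∈ R, ρ ≤ r ∨ s ≤ ρ) : #R ≤ #{t ∈ T | t < r} + #{t ∈ T | s < t} :=
  calc #R = #{ρ ∈ R | ρ ≤ r} + #{ρ ∈ R | ¬ ρ ≤ r} := (card_filter_add_card_filter_not _).symm
    _ ≤ #{ρ ∈ R | ρ ≤ r} + #{ρ ∈ R | s ≤ ρ} := by
      refine add_le_add le_rfl (card_le_card fun ρ hρ => ?_)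
      obtain ⟨hρR, hρr⟩ := mem_filter.1 hρ
      exact mem_filter.2 ⟨hρR, (hR ρ hρR).resolve_left hρr⟩
    _ ≤ _ :=
      add_le_add (h.card_filter_le_le_card_filter_lt r) (h.card_filter_ge_le_card_filter_gt s)

theorem card_add_one_le (h : Separates T R) (hT : T.Nonempty) : #R + 1 ≤ #T := by
  obtain ⟨s, hs⟩ := hT
  have hgt : #{t ∈ T | s < t} < #{t ∈ T | ¬ t < s} :=
    card_filter_lt_card_filter (fun _ => lt_asymm) hs (lt_irrefl s) (lt_irrefl s)
  calc #R + 1 ≤ #{t ∈ T | t < s} + #{t ∈ T | s < t} + 1 :=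
        add_le_add (h.card_le_card_filter_lt_add_card_filter_gt fun ρ _ => le_total ρ s) le_rfl
    _ ≤ #{t ∈ T | t < s} + #{t ∈ T | ¬ t < s} := by omega
    _ = #T := card_filter_add_card_filter_not _

theorem exists_mem_Ioo (h : Separates T R) (hcard : #T ≤ #R + 1) {r s : α} (hr : r ∈ T)
    (hs : s ∈ T) (hrs : r < s) : ∃ ρ ∈ R, r < ρ ∧ ρ < s := by
  -- otherwise `T` has at least `#R` points outside `[r, s]`, hence `#T ≥ #R + 2`
  by_contra! hR
  have hle := h.card_le_card_filter_lt_add_card_filter_gt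
    fun ρ hρ => (le_or_gt ρ r).imp_right (hR ρ hρ)
  have hgt : #{t ∈ T | s < t} < #{t ∈ T | s ≤ t} :=
    card_filter_lt_card_filter (fun _ => le_of_lt) hs (lt_irrefl s) le_rfl
  have hge : #{t ∈ T | s ≤ t} < #{t ∈ T | ¬ t < r} :=
    card_filter_lt_card_filter (fun _ hst => not_lt.2 (hrs.le.trans hst)) hr hrs.not_ge
      (lt_irrefl r)
  have := card_filter_add_card_filter_not (s := T) (· < r)
  omega

theorem existsUnique_mem_Ioo (h : Separates T R) (hcard : #T ≤ #R + 1) {r s : α} (hr : r ∈ T)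
    (hs : s ∈ T) (hrs : r < s) (hgap : ∀ t ∈ T, ¬ (r < t ∧ t < s)) :
    ∃! ρ, ρ ∈ R ∧ r < ρ ∧ ρ < s := by
  obtain ⟨ρ, hρ, hrρ, hρs⟩ := h.exists_mem_Ioo hcard hr hs hrs
  refine ⟨ρ, ⟨hρ, hrρ, hρs⟩, fun ρ' ⟨hρ', hrρ', hρ's⟩ => ?_⟩
  by_contra hne
  rcases lt_or_gt_of_ne hne with hlt | hlt
  · obtain ⟨t, ht, h1, h2⟩ := h.exists_between ρ' hρ' ρ hρ hlt
    exact hgap t ht ⟨hrρ'.trans h1, h2.trans hρs⟩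
  · obtain ⟨t, ht, h1, h2⟩ := h.exists_between ρ hρ ρ' hρ' hlt
    exact hgap t ht ⟨hrρ.trans h1, h2.trans hρ's⟩

end Separates

end LinearOrder

noncomputable section Gauss

/-- `gaussDeriv a b p · e^{-a x²/2 + b x} = (p · e^{-a x²/2 + b x})'`. -/
def gaussDeriv (a b : ℝ) (p : ℝ[X]) : ℝ[X] := -(C a) * X * p + C b * p + derivative p

def gaussianMul (a b : ℝ) (p : ℝ[X]) (x : ℝ) : ℝ := exp (-(a / 2) * x ^ 2 + b * x) * eval x p

variable {a b : ℝ} {p : ℝ[X]}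

theorem hasDerivAt_gaussianMul (x : ℝ) :
    HasDerivAt (gaussianMul a b p)
      (exp (-(a / 2) * x ^ 2 + b * x) * eval x (gaussDeriv a b p)) x := by
  have hquad : HasDerivAt (fun y => -(a / 2) * y ^ 2 + b * y) (-a * x + b) x := by
    refine (((hasDerivAt_pow 2 x).const_mul (-(a / 2))).add
      ((hasDerivAt_id' x).const_mul b)).congr_deriv ?_
    norm_num
    ring
  refine (hquad.exp.mul (p.hasDerivAt x)).congr_deriv ?_
  simp only [gaussDeriv, eval_add, eval_mul, eval_neg, eval_C, eval_X]
  ring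

theorem tendsto_gaussianMul_atTop (ha : 0 < a) : Tendsto (gaussianMul a b p) atTop (𝓝 0) := by
  have hquad : Tendsto (fun x => -(a / 2) * x ^ 2 + (b + 1) * x) atTop atBot := by
    have hlin : Tendsto (fun x : ℝ => -(a / 2) * x + (b + 1)) atTop atBot :=
      tendsto_atBot_add_const_right _ _ (tendsto_id.const_mul_atTop_of_neg (by linarith))
    refine (tendsto_id.atTop_mul_atBot₀ hlin).congr fun x => ?_
    simp only [id_eq]; ring
  have := p.tendsto_div_exp_atTop.mul (tendsto_exp_atBot.comp hquad)
  rw [zero_mul] at this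
  refine this.congr fun x => ?_
  rw [gaussianMul, Function.comp_apply, add_mul, one_mul, ← add_assoc, exp_add]
  field_simp

theorem tendsto_gaussianMul_atBot (ha : 0 < a) : Tendsto (gaussianMul a b p) atBot (𝓝 0) := by
  have := (tendsto_gaussianMul_atTop (b := -b) (p := p.comp (-X)) ha).comp tendsto_neg_atBot_atTop
  exact this.congr fun x => by simp [gaussianMul]

theorem mem_roots_toFinset_gaussDeriv (hq : gaussDeriv a b p ≠ 0) {x : ℝ}
    (hx : exp (-(a / 2) * x ^ 2 + b * x) * eval x (gaussDeriv a b p) = 0) :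
    x ∈ (gaussDeriv a b p).roots.toFinset := by
  simpa [mem_roots hq, exp_ne_zero] using hx

theorem separates_roots_gaussDeriv (ha : 0 < a) (hq : gaussDeriv a b p ≠ 0) :
    Separates (gaussDeriv a b p).roots.toFinset p.roots.toFinset := by
  have hg : ∀ x, HasDerivAt (gaussianMul a b p) _ x := hasDerivAt_gaussianMul
  have hcrit := fun x => mem_roots_toFinset_gaussDeriv (x := x) hq
  have hzero : ∀ r ∈ p.roots.toFinset, gaussianMul a b p r = 0 := fun r hr => by
    simp_all [gaussianMul]
  refine ⟨fun r hr => ?_, fun r hr => ?_, fun r hr s hs hrs => ?_⟩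
  · obtain ⟨c, hcr, hc⟩ := exists_lt_hasDerivAt_eq_zero_of_tendsto_atBot hg (r := r)
      (by simpa [hzero r hr] using tendsto_gaussianMul_atBot ha)
    exact ⟨c, hcrit c hc, hcr⟩
  · obtain ⟨c, hcr, hc⟩ := exists_gt_hasDerivAt_eq_zero_of_tendsto_atTop hg (r := r)
      (by simpa [hzero r hr] using tendsto_gaussianMul_atTop ha)
    exact ⟨c, hcrit c hc, hcr⟩
  · obtain ⟨c, hc, hc0⟩ := exists_hasDerivAt_eq_zero hrs
      (continuous_iff_continuousAt.2 fun x => (hg x).continuousAt).continuousOn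
      (by rw [hzero r hr, hzero s hs]) fun x _ => hg x
    exact ⟨c, hcrit c hc0, hc⟩

theorem card_roots_toFinset_lt_gaussDeriv (ha : 0 < a) (hq : gaussDeriv a b p ≠ 0) :
    #p.roots.toFinset < #(gaussDeriv a b p).roots.toFinset := by
  refine (separates_roots_gaussDeriv ha hq).card_add_one_le ?_
  obtain ⟨c, hc⟩ := exists_hasDerivAt_eq_zero_of_tendsto_atBot_atTop hasDerivAt_gaussianMul
    (tendsto_gaussianMul_atBot ha) (tendsto_gaussianMul_atTop ha)
  exact ⟨c, mem_roots_toFinset_gaussDeriv hq hc⟩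

end Gauss

theorem stmt_8_general (P : ℕ → ℝ[X]) (a b c : ℝ) (ha : 0 < a) (hc : c ≠ 0)
    (hdeg : ∀ k, (P k).natDegree = k)
    (hrec : ∀ k, P (k + 1) = C c * (-(C a) * X * P k + C b * P k + derivative (P k))) :
    ∀ k : ℕ, 1 ≤ k →
      -- P k has k distinct real zeros
      ((P k).roots.card = k ∧ (P k).roots.Nodup) ∧
      -- between consecutive zeros of P k there is exactly one zero of P (k-1)
      (∀ r s : ℝ, r < s → eval r (P k) = 0 → eval s (P k) = 0 →
        (∀ u : ℝ, eval u (P k) = 0 → ¬(r < u ∧ u < s)) →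
        ∃! t : ℝ, eval t (P (k - 1)) = 0 ∧ r < t ∧ t < s) ∧
      -- the extremal zeros of P k lie strictly outside those of P (k-1)
      (∀ t : ℝ, eval t (P (k - 1)) = 0 →
        (∃ r : ℝ, eval r (P k) = 0 ∧ r < t) ∧ (∃ s : ℝ, eval s (P k) = 0 ∧ t < s)) := by
  have hgauss : ∀ n, gaussDeriv a b (P n) ≠ 0 := fun n => by
    have hPn : P (n + 1) ≠ 0 := ne_zero_of_natDegree_gt (n := 0) (by rw [hdeg]; omega)
    rw [hrec n] at hPn
    exact right_ne_zero_of_mul hPn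
  have hmem : ∀ n x, x ∈ (P n).roots.toFinset ↔ eval x (P n) = 0 := fun n x => by
    have hPn : P n ≠ 0 := fun h => hgauss n (by simp [h, gaussDeriv])
    rw [Multiset.mem_toFinset, mem_roots hPn, IsRoot.def]
  have hroots : ∀ n, (P (n + 1)).roots = (gaussDeriv a b (P n)).roots := fun n => by
    rw [hrec n]; exact roots_C_mul _ hc
  have hsep : ∀ n, Separates (P (n + 1)).roots.toFinset (P n).roots.toFinset := fun n => by
    rw [hroots n]; exact separates_roots_gaussDeriv ha (hgauss n)
  have hsimple : ∀ n, (P n).roots.card = n ∧ (P n).roots.Nodup := by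
    intro n
    induction n with
    | zero => rw [eq_C_of_natDegree_eq_zero (hdeg 0), roots_C]; simp
    | succ n ih =>
      have hlow := card_roots_toFinset_lt_gaussDeriv ha (hgauss n)
      rw [← hroots, Multiset.toFinset_card_of_nodup ih.2, ih.1] at hlow
      have hup := (P (n + 1)).card_roots'.trans_eq (hdeg (n + 1))
      have := Multiset.toFinset_card_le (P (n + 1)).roots
      exact ⟨by omega, Multiset.toFinset_card_eq_card_iff_nodup.1 (by omega)⟩
  intro k hk
  obtain ⟨m, rfl⟩ := Nat.exists_eq_add_of_le' hk
  have hcard : #(P (m + 1)).roots.toFinset ≤ #(P m).roots.toFinset + 1 := by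
    simp only [Multiset.toFinset_card_of_nodup (hsimple _).2, (hsimple _).1, le_refl]
  simp only [Nat.add_sub_cancel, ← hmem]
  exact ⟨hsimple _, fun r s hrs hr hs hgap => (hsep m).existsUnique_mem_Ioo hcard hr hs hrs hgap,
    fun t ht => ⟨(hsep m).exists_lt t ht, (hsep m).exists_gt t ht⟩⟩

theorem stmt_8 (P : ℕ → ℝ[X]) (a b c : ℝ) (ha : 0 < a) (hc : c ≠ 0)
    (hdeg : ∀ k, (P k).natDegree = k)
    (hP0 : ∃ r : ℝ, r ≠ 0 ∧ P 0 = C r)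
    (hrec : ∀ k, P (k + 1) = C c * (-(C a) * X * P k + C b * P k + derivative (P k))) :
    ∀ k : ℕ, 1 ≤ k →
      -- P k has k distinct real zeros
      ((P k).roots.card = k ∧ (P k).roots.Nodup) ∧
      -- between consecutive zeros of P k there is exactly one zero of P (k-1)
      (∀ r s : ℝ, r < s → eval r (P k) = 0 → eval s (P k) = 0 →
        (∀ u : ℝ, eval u (P k) = 0 → ¬(r < u ∧ u < s)) →
        ∃! t : ℝ, eval t (P (k - 1)) = 0 ∧ r < t ∧ t < s) ∧
      -- the extremal zeros of P k lie strictly outside those of P (k-1)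
      (∀ t : ℝ, eval t (P (k - 1)) = 0 →
        (∃ r : ℝ, eval r (P k) = 0 ∧ r < t) ∧ (∃ s : ℝ, eval s (P k) = 0 ∧ t < s)) :=
  stmt_8_general P a b c ha hc hdeg hrec
end

section
/- Let H_k denote the k-th (physicists') Hermite polynomial, and let M_k be its largest zero. Then for each k ∈ ℕ, the Turán expression (H_{k+1}(x))² − H_{k+2}(x)·H_k(x) is non-zero at every complex x with |Re x| > M_{k+1}. -/
/-!
Write `T_k = H_{k+1}² - H_{k+2} H_k` as the Wronskian `H_{k+1}' H_k - H_k' H_{k+1}`. The recurrence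
`T_{k+1} = 2(k+1) T_k + 2 H_{k+1}²`, `T_0 = 2`, makes `T_k` positive on `ℝ`, and the three-term
recurrence makes `Im (H_{k+1}(z) * conj H_k(z))` positive for `Im z > 0`, so `H_{k+1}` has only real
zeros `r`, all simple because `T_k(r) ≠ 0`. Lagrange interpolation of `H_k` at these zeros gives
`T_k / H_{k+1}² = ∑ w_r / (x - r)²` with `w_r = T_k(r) / H_{k+1}'(r)² > 0`. When `Re x` exceeds every
`r` and `Im x ≠ 0`, each term has imaginary part of sign `-sgn (Im x)`, so the sum does not vanish;
the case `Re x < -M_{k+1}` follows because `T_k` is even.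
-/

open Polynomial Finset Lagrange ComplexConjugate

theorem wronskian_eq_sum_C_mul_sq {R ι : Type*} [CommRing R] {s : Finset ι} {v : ι → R}
    {B : ι → R[X]} {w : ι → R} {P Q : R[X]} (hP : ∀ i ∈ s, P = (X - C (v i)) * B i)
    (hQ : Q = ∑ i ∈ s, C (w i) * B i) :
    wronskian Q P = ∑ i ∈ s, C (w i) * B i ^ 2 := by
  rw [hQ, wronskian, derivative_sum, sum_mul, sum_mul, ← sum_sub_distrib]
  refine sum_congr rfl fun i hi => ?_
  rw [hP i hi]
  simp only [derivative_mul, derivative_C, derivative_sub, derivative_X, zero_mul, zero_add,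
    sub_zero, one_mul]
  ring

theorem eq_sum_C_mul_nodal_erase {F : Type*} [Field F] [DecidableEq F] {s : Finset F} {Q : F[X]}
    (hQ : Q.degree < #s) :
    Q = ∑ r ∈ s, C (Q.eval r * nodalWeight s id r) * nodal (s.erase r) id := by
  conv_lhs => rw [eq_interpolate (v := id) (Set.injOn_id _) hQ, interpolate_apply]
  refine sum_congr rfl fun r hr => ?_
  rw [basis_eq_prod_sub_inv_mul_nodal_div hr, ← nodal_erase_eq_nodal_div hr, C_mul, id]
  ring

theorem Polynomial.Splits.eq_C_leadingCoeff_mul_nodal {F : Type*} [Field F] [DecidableEq F]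
    {P : F[X]} (hP : P.Splits) (hnd : P.roots.Nodup) :
    P = C P.leadingCoeff * nodal P.roots.toFinset id := by
  conv_lhs => rw [hP.eq_prod_roots, ← Multiset.dedup_eq_self.mpr hnd]
  rfl

theorem pos_of_eval_sum_C_mul_sq_pos {ι : Type*} {s : Finset ι} {v : ι → ℝ} {B : ι → ℝ[X]}
    {w : ι → ℝ} (hB : ∀ i ∈ s, ∀ j ∈ s, j ≠ i → eval (v j) (B i) = 0)
    (hpos : ∀ i ∈ s, 0 < eval (v i) (∑ j ∈ s, C (w j) * B j ^ 2)) {i : ι} (hi : i ∈ s) :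
    0 < w i := by
  have h := hpos i hi
  rw [eval_finsetSum, sum_eq_single_of_mem i hi fun j hj hji => by
    simp [hB j hj i hi hji.symm]] at h
  simp only [eval_mul, eval_C, eval_pow] at h
  exact pos_of_mul_pos_left h (sq_nonneg _)

theorem sum_div_sq_ne_zero {ι : Type*} {s : Finset ι} (hs : s.Nonempty) {w r : ι → ℝ}
    (hw : ∀ i ∈ s, 0 < w i) {x : ℂ} (hx : x.im ≠ 0) (hr : ∀ i ∈ s, r i < x.re) :
    ∑ i ∈ s, (w i : ℂ) / (x - r i) ^ 2 ≠ 0 := by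
  suffices x.im * (∑ i ∈ s, (w i : ℂ) / (x - r i) ^ 2).im < 0 by
    intro h; simp [h] at this
  rw [Complex.im_sum, mul_sum]
  refine sum_neg (fun i hi => ?_) hs
  have hxr : x - r i ≠ 0 := fun h => hx (by simpa using congrArg Complex.im h)
  have hterm : x.im * ((w i : ℂ) / (x - r i) ^ 2).im
      = -(2 * w i * (x.re - r i) * x.im ^ 2) / Complex.normSq ((x - r i) ^ 2) := by
    simp only [sq, Complex.div_im, Complex.ofReal_im, Complex.mul_re, Complex.sub_re,
      Complex.ofReal_re, Complex.sub_im, sub_zero, zero_mul, map_mul, zero_div, Complex.mul_im,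
      zero_sub, mul_neg]
    ring
  rw [hterm]
  refine div_neg_of_neg_of_pos (neg_neg_of_pos ?_) (Complex.normSq_pos.mpr (pow_ne_zero 2 hxr))
  exact mul_pos (mul_pos (mul_pos two_pos (hw i hi)) (sub_pos.mpr (hr i hi)))
    (pow_two_pos_of_ne_zero hx)

theorem nodup_roots_of_eval_wronskian_ne_zero {F : Type*} [Field F] {P Q : F[X]}
    (hW : ∀ t, eval t (wronskian Q P) ≠ 0) : P.roots.Nodup := by
  classical
  rcases eq_or_ne P 0 with rfl | hP
  · simp
  rw [Multiset.nodup_iff_count_le_one]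
  intro t
  rw [count_roots]
  by_contra! h
  obtain ⟨h0, h1⟩ := (one_lt_rootMultiplicity_iff_isRoot hP).mp h
  exact hW t (by simp [wronskian, h0.eq_zero, h1.eq_zero])

theorem aeval_ne_zero_of_splits {P : ℝ[X]} (hP : P.Splits) (hP0 : P ≠ 0) {x : ℂ}
    (hx : x.im ≠ 0) : aeval x P ≠ 0 := by
  intro h
  obtain ⟨t, rfl⟩ := hP.mem_range_of_isRoot hP0 (i := algebraMap ℝ ℂ)
    (by simpa [aeval_def, eval_map] using h)
  simp at hx

theorem aeval_sum_C_mul_sq {ι : Type*} {s : Finset ι} {v w : ι → ℝ} {B : ι → ℝ[X]} {P : ℝ[X]}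
    (hP : ∀ i ∈ s, P = (X - C (v i)) * B i) {x : ℂ} (hx : ∀ i ∈ s, x - v i ≠ 0) :
    aeval x (∑ i ∈ s, C (w i) * B i ^ 2) =
      aeval x P ^ 2 * ∑ i ∈ s, (w i : ℂ) / (x - v i) ^ 2 := by
  rw [map_sum, mul_sum]
  refine sum_congr rfl fun i hi => ?_
  have hPx : aeval x P = (x - v i) * aeval x (B i) := by
    rw [hP i hi, map_mul (aeval x) (X - C (v i))]
    simp
  rw [map_mul, map_pow, hPx, aeval_C, Complex.coe_algebraMap]
  field_simp [hx i hi]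

theorem aeval_wronskian_ne_zero_of_im_ne_zero {P Q : ℝ[X]} (hP : P.Splits)
    (hQ : Q.degree < P.degree) (hW : ∀ t : ℝ, 0 < eval t (wronskian Q P)) {x : ℂ}
    (hxi : x.im ≠ 0) (hx : ∀ r ∈ P.roots, r < x.re) : aeval x (wronskian Q P) ≠ 0 := by
  classical
  have hP0 : P ≠ 0 := by rintro rfl; simp at hQ
  have hnd := nodup_roots_of_eval_wronskian_ne_zero fun t => (hW t).ne'
  set R := P.roots.toFinset
  set c := P.leadingCoeff
  have hc : c ≠ 0 := leadingCoeff_ne_zero.mpr hP0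
  set B : ℝ → ℝ[X] := fun r => C c * nodal (R.erase r) id
  set w : ℝ → ℝ := fun r => Q.eval r * nodalWeight R id r / c
  have hPB : ∀ r ∈ R, P = (X - C r) * B r := fun r hr => by
    rw [hP.eq_C_leadingCoeff_mul_nodal hnd, nodal_eq_mul_nodal_erase hr]
    simp only [B, id]
    ring
  have hQB : Q = ∑ r ∈ R, C (w r) * B r := by
    have hdeg : Q.degree < #R := by
      rwa [card_def, Multiset.toFinset_val, Multiset.dedup_eq_self.mpr hnd,
        ← hP.degree_eq_card_roots hP0]
    refine (eq_sum_C_mul_nodal_erase hdeg).trans (sum_congr rfl fun r _ => ?_)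
    simp only [w, B, ← mul_assoc, ← C_mul, div_mul_cancel₀ _ hc]
  have hWB := wronskian_eq_sum_C_mul_sq hPB hQB
  have hw : ∀ r ∈ R, 0 < w r := by
    refine fun r hr => pos_of_eval_sum_C_mul_sq_pos (v := id) (fun i _ j hj hji => ?_)
      (fun i _ => hWB ▸ hW i) hr
    simp only [B, eval_mul, eval_C]
    rw [eval_nodal_at_node (v := id) (mem_erase.mpr ⟨hji, hj⟩), mul_zero]
  have hRne : R.Nonempty := by
    rw [nonempty_iff_ne_empty]
    rintro hR0
    simpa [hR0, hWB] using hW 0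
  have hxr : ∀ r ∈ R, x - r ≠ 0 := fun r _ h => hxi (by simpa using congrArg Complex.im h)
  rw [hWB, aeval_sum_C_mul_sq hPB hxr]
  exact mul_ne_zero (pow_ne_zero 2 (aeval_ne_zero_of_splits hP hP0 hxi))
    (sum_div_sq_ne_zero hRne hw hxi fun r hr => hx r (Multiset.mem_toFinset.mp hr))

theorem aeval_wronskian_ne_zero {P Q : ℝ[X]} (hP : P.Splits) (hQ : Q.degree < P.degree)
    (hW : ∀ t : ℝ, 0 < eval t (wronskian Q P)) {x : ℂ} (hx : ∀ r ∈ P.roots, r < x.re) :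
    aeval x (wronskian Q P) ≠ 0 := by
  rcases eq_or_ne x.im 0 with hxi | hxi
  · have hxre : x = (x.re : ℂ) := Complex.ext rfl (by simp [hxi])
    rw [hxre, ← Complex.coe_algebraMap, aeval_algebraMap_apply_eq_algebraMap_eval,
      Complex.coe_algebraMap]
    exact_mod_cast (hW x.re).ne'
  · exact aeval_wronskian_ne_zero_of_im_ne_zero hP hQ hW hxi hx

noncomputable def turan (H : ℕ → ℝ[X]) (k : ℕ) : ℝ[X] :=
  H (k + 1) ^ 2 - H (k + 2) * H k

section Hermite

variable {H : ℕ → ℝ[X]}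

theorem turan_eq_wronskian (hHrec : ∀ k, H (k + 1) = 2 * X * H k - derivative (H k)) (k : ℕ) :
    turan H k = wronskian (H k) (H (k + 1)) := by
  rw [turan, wronskian, hHrec (k + 1)]
  linear_combination (H (k + 1)) * hHrec k

variable (hH0 : H 0 = 1) (hHrec : ∀ k, H (k + 1) = 2 * X * H k - derivative (H k))
include hH0 hHrec

theorem derivative_hermite_succ (k : ℕ) : derivative (H (k + 1)) = 2 * (k + 1) * H k := by
  induction k with
  | zero => simp [hHrec 0, hH0]
  | succ k ih =>
    rw [hHrec (k + 1), derivative_sub, derivative_mul, ih, derivative_mul]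
    simp only [derivative_mul, derivative_ofNat, derivative_X, derivative_add, derivative_natCast,
      derivative_one]
    push_cast
    linear_combination (-2 * (k : ℝ[X]) - 2) * hHrec k

theorem hermite_succ_succ (k : ℕ) :
    H (k + 2) = 2 * X * H (k + 1) - 2 * (k + 1 : ℝ[X]) * H k := by
  rw [hHrec (k + 1), derivative_hermite_succ hH0 hHrec]

theorem turan_succ (k : ℕ) : turan H (k + 1) = 2 * (k + 1) * turan H k + 2 * H (k + 1) ^ 2 := by
  have h1 := hermite_succ_succ hH0 hHrec (k + 1)
  push_cast at h1
  rw [turan, turan]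
  linear_combination (-H (k + 1)) * h1 + H (k + 2) * hermite_succ_succ hH0 hHrec k

theorem turan_zero : turan H 0 = 2 := by
  simp only [turan, hermite_succ_succ hH0 hHrec 0, hHrec 0, hH0, derivative_one,
    Nat.cast_zero]
  ring

theorem eval_turan_pos (k : ℕ) (t : ℝ) : 0 < eval t (turan H k) := by
  induction k with
  | zero => simp [turan_zero hH0 hHrec]
  | succ k ih =>
    rw [turan_succ hH0 hHrec]
    simp only [eval_add, eval_mul, eval_pow, eval_ofNat, eval_natCast, eval_one]
    positivity

theorem degree_hermite (k : ℕ) : (H k).degree = k := by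
  induction k with
  | zero => simp [hH0]
  | succ k ih =>
    have h2X : (2 * X * H k).degree = ↑(k + 1) := by
      rw [degree_mul, ih, ← map_ofNat C 2, degree_C_mul_X two_ne_zero, add_comm]
      rfl
    have hlt : (derivative (H k)).degree < (2 * X * H k).degree :=
      h2X ▸ degree_derivative_le.trans_lt (ih ▸ WithBot.coe_lt_coe.mpr k.lt_succ_self)
    rw [hHrec k, degree_sub_eq_left_of_degree_lt hlt, h2X]

theorem hermite_comp_neg_X (k : ℕ) : (H k).comp (-X) = (-1) ^ k * H k := by
  induction k with
  | zero => simp [hH0]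
  | succ k ih =>
    have hd : (derivative (H k)).comp (-X) = -derivative ((H k).comp (-X)) := by
      simp [derivative_comp]
    rw [hHrec k, sub_comp, mul_comp, mul_comp, X_comp, ofNat_comp, hd, ih, derivative_mul]
    simp only [derivative_pow, derivative_neg, derivative_one, mul_zero, zero_mul, neg_zero]
    ring

theorem turan_comp_neg_X (k : ℕ) : (turan H k).comp (-X) = turan H k := by
  have hsq : ((-1 : ℝ[X]) ^ k) ^ 2 = 1 := by rw [← pow_mul, pow_mul', neg_one_sq, one_pow]
  simp only [turan, sub_comp, mul_comp, pow_comp, hermite_comp_neg_X hH0 hHrec]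
  linear_combination (H (k + 1) ^ 2 - H (k + 2) * H k) * hsq

theorem aeval_hermite_succ_succ (k : ℕ) (z : ℂ) :
    aeval z (H (k + 2)) = 2 * z * aeval z (H (k + 1)) - 2 * (k + 1) * aeval z (H k) := by
  simp [hermite_succ_succ hH0 hHrec k, map_ofNat]

theorem im_aeval_hermite_succ_mul_conj_pos {z : ℂ} (hz : 0 < z.im) (k : ℕ) :
    0 < (aeval z (H (k + 1)) * conj (aeval z (H k))).im := by
  induction k with
  | zero => simpa [hHrec 0, hH0, map_ofNat] using hz
  | succ k ih =>
    have : (aeval z (H (k + 2)) * conj (aeval z (H (k + 1)))).im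
        = 2 * z.im * Complex.normSq (aeval z (H (k + 1)))
          + 2 * (k + 1) * (aeval z (H (k + 1)) * conj (aeval z (H k))).im := by
      rw [aeval_hermite_succ_succ hH0 hHrec]
      simp only [Complex.mul_im, Complex.sub_re, Complex.mul_re, Complex.re_ofNat,
        Complex.im_ofNat, zero_mul, sub_zero, add_zero, Complex.add_re, Complex.natCast_re,
        Complex.one_re, Complex.add_im, Complex.natCast_im, Complex.one_im, mul_zero,
        Complex.conj_im, mul_neg, Complex.sub_im, Complex.conj_re, Complex.normSq_apply]
      ring
    rw [this]
    exact add_pos_of_nonneg_of_pos (mul_nonneg (by positivity) (Complex.normSq_nonneg _))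
      (mul_pos (by positivity) ih)

theorem aeval_hermite_ne_zero {z : ℂ} (hz : z.im ≠ 0) (k : ℕ) : aeval z (H k) ≠ 0 := by
  wlog hz' : 0 < z.im generalizing z
  · have hconj : 0 < (conj z).im := by
      rw [Complex.conj_im]
      exact neg_pos.mpr (lt_of_le_of_ne (not_lt.mp hz') hz)
    simpa [aeval_conj] using this (by simpa using hz) hconj
  cases k with
  | zero => simp [hH0]
  | succ k =>
    intro h
    simpa [h] using im_aeval_hermite_succ_mul_conj_pos hH0 hHrec hz' k

theorem splits_hermite (k : ℕ) : (H k).Splits :=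
  Splits.of_splits_map (algebraMap ℝ ℂ) (IsAlgClosed.splits _) fun z hz => by
    have hz0 : aeval z (H k) = 0 := by
      simpa [aeval_def, eval_map] using (mem_roots'.mp hz).2
    have hzi : z.im = 0 := by
      by_contra h
      exact aeval_hermite_ne_zero hH0 hHrec h k hz0
    exact ⟨z.re, Complex.ext (by simp) (by simp [hzi])⟩

end Hermite

theorem stmt_10 (H : ℕ → ℝ[X]) (hH0 : H 0 = 1)
    (hHrec : ∀ k, H (k + 1) = 2 * X * H k - derivative (H k))
    (M : ℕ → ℝ)
    (hM : ∀ k, 1 ≤ k → eval (M k) (H k) = 0 ∧ ∀ r : ℝ, eval r (H k) = 0 → r ≤ M k) :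
    ∀ k : ℕ, ∀ x : ℂ, M (k + 1) < |x.re| →
      (aeval x (H (k + 1))) ^ 2 - aeval x (H (k + 2)) * aeval x (H k) ≠ 0 := by
  intro k x hx
  have hroots : ∀ r ∈ (H (k + 1)).roots, r ≤ M (k + 1) := fun r hr =>
    (hM (k + 1) k.succ_pos).2 r (mem_roots'.mp hr).2
  have hT : ∀ y : ℂ, M (k + 1) < y.re → aeval y (turan H k) ≠ 0 := fun y hy => by
    rw [turan_eq_wronskian hHrec]
    refine aeval_wronskian_ne_zero (splits_hermite hH0 hHrec _) ?_ (fun t => ?_)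
      fun r hr => (hroots r hr).trans_lt hy
    · rw [degree_hermite hH0 hHrec, degree_hermite hH0 hHrec]
      exact_mod_cast k.lt_succ_self
    · exact turan_eq_wronskian hHrec k ▸ eval_turan_pos hH0 hHrec k t
  rw [show aeval x (H (k + 1)) ^ 2 - aeval x (H (k + 2)) * aeval x (H k) = aeval x (turan H k) by
    simp [turan]]
  rcases le_or_gt 0 x.re with hx0 | hx0
  · exact hT x (by rwa [abs_of_nonneg hx0] at hx)
  · rw [← turan_comp_neg_X hH0 hHrec, aeval_comp, map_neg, aeval_X]
    exact hT (-x) (by simpa [abs_of_neg hx0] using hx)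
end

section
/- Let {P_k} be a sequence of real polynomials with deg P_k = k, each having only real non-positive zeros, satisfying x·P_k'(x) − k·P_k(x) = P_{k-1}(x) for all k ≥ 1. Then for every k ∈ ℕ, the Turán expression (P_{k+1}(x))² − P_{k+2}(x)·P_k(x) is weakly Hurwitz stable. -/
/-! Put `p = P (k + 2)` and `n = k + 2`, so that `P (k + 1) = X p' - n p` and
`P k = X P (k + 1)' - (n - 1) P (k + 1)`. If `p(x) ≠ 0` and `p` has roots `zᵢ`, the logarithmic
derivatives `p'/p = ∑ 1/(x - zᵢ)` and `(p'² - p p'')/p² = ∑ 1/(x - zᵢ)²` turn the Turán expression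
at `x` into `p(x)² ∑ (zᵢ/(x - zᵢ))²`. For `zᵢ ≤ 0` and `re x > 0`, every term
`x (zᵢ/(x - zᵢ))² = zᵢ²/(x - 2zᵢ + zᵢ²/x)` has nonnegative real part, positive unless `zᵢ = 0`;
so the sum vanishes only when all roots are `0`, and then `P (k + 1)(x) = p(x) ∑ zᵢ/(x - zᵢ) = 0`,
contradicting `re x > 0`. -/

open Polynomial

namespace Polynomial

variable {R S : Type*} [CommRing R] [CommRing S]

noncomputable def eulerOp (n : ℕ) (p : R[X]) : R[X] :=
  X * derivative p - (n : R[X]) * p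

@[simp]
theorem eval_eulerOp (n : ℕ) (p : R[X]) (x : R) :
    (eulerOp n p).eval x = x * p.derivative.eval x - n * p.eval x := by
  simp [eulerOp]

theorem map_eulerOp (φ : R →+* S) (n : ℕ) (p : R[X]) :
    (eulerOp n p).map φ = eulerOp n (p.map φ) := by
  simp [eulerOp, derivative_map]

section Field

variable {K : Type*} [Field K]

theorem eval_derivative_sq_sub_eq_sum_prod_X_sub_C (s : Multiset K) {x : K}
    (hx : ∀ z ∈ s, x - z ≠ 0) :
    ((s.map fun z ↦ X - C z).prod.derivative.eval x) ^ 2 -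
        (s.map fun z ↦ X - C z).prod.eval x *
          (s.map fun z ↦ X - C z).prod.derivative.derivative.eval x =
      (s.map fun z ↦ X - C z).prod.eval x ^ 2 * (s.map fun z ↦ 1 / (x - z) ^ 2).sum := by
  induction s using Multiset.induction_on with
  | empty => simp
  | cons r s ih =>
    have hr : x - r ≠ 0 := hx r (Multiset.mem_cons_self r s)
    specialize ih fun z hz ↦ hx z (Multiset.mem_cons_of_mem hz)
    simp only [Multiset.map_cons, Multiset.prod_cons, Multiset.sum_cons, derivative_mul,
      derivative_add, derivative_sub, derivative_X, derivative_C, sub_zero, one_mul, eval_mul,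
      eval_add, eval_sub, eval_X, eval_C]
    field_simp
    linear_combination (x - r) ^ 2 * ih

variable {f : K[X]} {x : K}

theorem sub_ne_zero_of_mem_roots (hx : f.eval x ≠ 0) {z : K} (hz : z ∈ f.roots) : x - z ≠ 0 :=
  sub_ne_zero.2 fun h ↦ hx (h ▸ (mem_roots'.1 hz).2)

theorem Splits.eval_derivative_sq_sub_eq_eval_sq_mul_sum (hf : f.Splits) (hx : f.eval x ≠ 0) :
    f.derivative.eval x ^ 2 - f.eval x * f.derivative.derivative.eval x =
      f.eval x ^ 2 * (f.roots.map fun z ↦ 1 / (x - z) ^ 2).sum := by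
  have hprod := eval_derivative_sq_sub_eq_sum_prod_X_sub_C f.roots
    fun z hz ↦ sub_ne_zero_of_mem_roots hx hz
  -- abbreviate `f.roots` so that rewriting `f` only touches the evaluations
  set s := f.roots
  rw [hf.eq_prod_roots]
  simp only [derivative_mul, derivative_C, zero_mul, zero_add, eval_mul, eval_C]
  linear_combination f.leadingCoeff ^ 2 * hprod

theorem Splits.eval_eulerOp_natDegree (hf : f.Splits) (hx : f.eval x ≠ 0) :
    (eulerOp f.natDegree f).eval x = f.eval x * (f.roots.map fun z ↦ z / (x - z)).sum := by
  have hsum : (f.roots.map fun z ↦ z / (x - z)).sum =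
      x * (f.roots.map fun z ↦ 1 / (x - z)).sum - f.natDegree := by
    rw [← splits_iff_card_roots.1 hf]
    have hterm : ∀ z ∈ f.roots, z / (x - z) = x * (1 / (x - z)) - 1 := fun z hz ↦ by
      field_simp [sub_ne_zero_of_mem_roots hx hz]
      ring
    simp [Multiset.map_congr rfl hterm, Multiset.sum_map_sub, Multiset.sum_map_mul_left]
  rw [eval_eulerOp, hf.eval_derivative_eq_eval_mul_sum hx, hsum]
  ring

theorem Splits.eval_eulerOp_sq_sub_eval_mul_eval_eulerOp_eulerOp {n : ℕ} (hf : f.Splits)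
    (hdeg : f.natDegree = n + 1) (hx : f.eval x ≠ 0) :
    (eulerOp (n + 1) f).eval x ^ 2 - f.eval x * (eulerOp n (eulerOp (n + 1) f)).eval x =
      f.eval x ^ 2 * (f.roots.map fun z ↦ (z / (x - z)) ^ 2).sum := by
  have hsum : (f.roots.map fun z ↦ (z / (x - z)) ^ 2).sum =
      x ^ 2 * (f.roots.map fun z ↦ 1 / (x - z) ^ 2).sum
        - 2 * x * (f.roots.map fun z ↦ 1 / (x - z)).sum + (n + 1) := by
    have hterm : ∀ z ∈ f.roots, (z / (x - z)) ^ 2 =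
        x ^ 2 * (1 / (x - z) ^ 2) - 2 * x * (1 / (x - z)) + 1 := fun z hz ↦ by
      field_simp [sub_ne_zero_of_mem_roots hx hz]
      ring
    simp [Multiset.map_congr rfl hterm, Multiset.sum_map_add, Multiset.sum_map_sub,
      Multiset.sum_map_mul_left, splits_iff_card_roots.1 hf, hdeg]
    ring
  have h1 := hf.eval_derivative_eq_eval_mul_sum hx
  have h2 := hf.eval_derivative_sq_sub_eq_eval_sq_mul_sum hx
  simp only [eulerOp, derivative_mul, derivative_sub, derivative_X, derivative_natCast,
    eval_sub, eval_mul, eval_add, eval_X, eval_natCast, one_mul, zero_mul, eval_zero, hsum]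
  push_cast
  linear_combination x ^ 2 * h2 - 2 * x * f.eval x * h1

end Field
end Polynomial

namespace Complex

theorem re_mul_div_sub_sq_pos {x : ℂ} (hx : 0 < x.re) {r : ℝ} (hr : r < 0) :
    0 < (x * (r / (x - r)) ^ 2).re := by
  have hx0 : x ≠ 0 := fun h ↦ by simp [h] at hx
  set w := x - 2 * r + r ^ 2 * x⁻¹ with hw
  have hw_re : w.re = x.re - 2 * r + r ^ 2 * (x.re / normSq x) := by
    rw [hw, add_re, sub_re, ← ofReal_pow, re_ofReal_mul, inv_re]
    norm_num
  have hw_re_pos : 0 < w.re := by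
    have : 0 ≤ r ^ 2 * (x.re / normSq x) :=
      mul_nonneg (sq_nonneg r) (div_nonneg hx.le (normSq_nonneg x))
    linarith
  have hw0 : w ≠ 0 := fun h ↦ by simp [h] at hw_re_pos
  have hterm : x * (r / (x - r)) ^ 2 = ((r ^ 2 : ℝ) : ℂ) * w⁻¹ := by
    have : (x - r) ^ 2 = x * w := by
      rw [hw]
      field_simp
      ring
    rw [div_pow, this]
    push_cast
    field_simp
  rw [hterm, re_ofReal_mul, inv_re]
  exact mul_pos (by nlinarith) (div_pos hw_re_pos (normSq_pos.2 hw0))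

theorem re_mul_sum_div_sub_sq_pos {x : ℂ} (hx : 0 < x.re) {s : Multiset ℂ}
    (hs : ∀ z ∈ s, ∃ r : ℝ, r ≤ 0 ∧ z = r) (hne : ∃ z ∈ s, z ≠ 0) :
    0 < (x * (s.map fun z ↦ (z / (x - z)) ^ 2).sum).re := by
  rw [← Multiset.sum_map_mul_left, ← coe_reAddGroupHom, map_multiset_sum, Multiset.map_map]
  calc (0 : ℝ) = (s.map fun _ ↦ (0 : ℝ)).sum := by simp
    _ < _ := by
      refine Multiset.sum_lt_sum (fun z hz ↦ ?_) ?_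
      · obtain ⟨r, hr, rfl⟩ := hs z hz
        rcases hr.lt_or_eq with hr | rfl
        · exact (re_mul_div_sub_sq_pos hx hr).le
        · simp
      · obtain ⟨z, hz, hz0⟩ := hne
        obtain ⟨r, hr, rfl⟩ := hs z hz
        exact ⟨_, hz, re_mul_div_sub_sq_pos hx (hr.lt_of_ne (by simpa using hz0))⟩

end Complex

theorem stmt_12 (P : ℕ → ℝ[X])
    (hdeg : ∀ k, (P k).natDegree = k)
    -- each P k has only real non-positive zeros
    (hzeros : ∀ k, ∀ z : ℂ, aeval z (P k) = 0 → ∃ r : ℝ, r ≤ 0 ∧ z = (r : ℂ))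
    (hrec : ∀ k : ℕ, 1 ≤ k → X * derivative (P k) - (k : ℝ[X]) * P k = P (k - 1)) :
    ∀ k : ℕ, ∀ x : ℂ, 0 < x.re →
      (aeval x (P (k + 1))) ^ 2 - aeval x (P (k + 2)) * aeval x (P k) ≠ 0 := by
  intro k x hx
  have hx_not_root : ∀ j, aeval x (P j) ≠ 0 := fun j h ↦ by
    obtain ⟨r, hr, rfl⟩ := hzeros j x h
    rw [Complex.ofReal_re] at hx
    linarith
  have haeval : ∀ j, aeval x (P j) = ((P j).map (algebraMap ℝ ℂ)).eval x := fun j ↦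
    (eval_map_algebraMap _ _).symm
  set p := (P (k + 2)).map (algebraMap ℝ ℂ)
  have hp : p.natDegree = k + 2 := (natDegree_map _).trans (hdeg _)
  have hpx : p.eval x ≠ 0 := haeval (k + 2) ▸ hx_not_root (k + 2)
  have hP₁ : P (k + 1) = eulerOp (k + 2) (P (k + 2)) := (hrec (k + 2) (by omega)).symm
  have hP₀ : P k = eulerOp (k + 1) (P (k + 1)) := (hrec (k + 1) (by omega)).symm
  have hroots : ∀ z ∈ p.roots, ∃ r : ℝ, r ≤ 0 ∧ z = r := fun z hz ↦
    hzeros _ z (mem_aroots.1 hz).2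
  have hsplit : p.Splits := IsAlgClosed.splits p
  rw [haeval, haeval, haeval, hP₀, hP₁, map_eulerOp, map_eulerOp, map_eulerOp,
    hsplit.eval_eulerOp_sq_sub_eval_mul_eval_eulerOp_eulerOp hp hpx]
  refine mul_ne_zero (pow_ne_zero _ hpx) fun hsum ↦ ?_
  have hroots_zero : ∀ z ∈ p.roots, z = 0 := by
    by_contra! hne
    simpa [hsum] using Complex.re_mul_sum_div_sub_sq_pos hx hroots hne
  apply hx_not_root (k + 1)
  have hP₁x := hsplit.eval_eulerOp_natDegree hpx
  rw [hp] at hP₁x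
  rw [haeval, hP₁, map_eulerOp, hP₁x, Multiset.sum_eq_zero, mul_zero]
  intro y hy
  obtain ⟨z, hz, rfl⟩ := Multiset.mem_map.1 hy
  simp [hroots_zero z hz]
end

section
/- Let T_k denote the Chebyshev polynomials of the first kind and define the extended Turán expression T_k^{(n)}(x) = Σ_{j=0}^{2n} ((−1)^{n+j}/(2n)!)·C(2n, j)·T_{j+k}(x)·T_{2n+k−j}(x). Then for all n ≥ 1 and k ∈ ℕ, T_k^{(n)}(x) = (2^{2n−1}/(2n)!)·(1 − x²)^n. -/
/-!
If `z + w = 2x` and `zw = 1` then `2 T_m(x) = z^m + w^m`. Expanding `T_{j+k}(x) T_{2n+k-j}(x)`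
this way, `zw = 1` removes the dependence on `k` from the cross terms, the term
`z^{2n+2k} + w^{2n+2k}` is killed by the alternating binomial sum, and the cross terms sum to
`(z - w)^{2n} + (w - z)^{2n} = 2 (4x^2 - 4)^n`. Over `ℂ` such `z, w` exist for every `x`, so
the identity holds in `ℂ[X]` (after cancelling a factor `4`), hence in `ℤ[X]` and in every
commutative ring.
-/

open Polynomial Polynomial.Chebyshev Finset

namespace Polynomial.Chebyshev

variable {R : Type*} [CommRing R]

theorem two_mul_eval_T_of_mul_eq_one {z w x : R} (hzw : z * w = 1) (hx : z + w = 2 * x)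
    (m : ℕ) : 2 * (T R m).eval x = z ^ m + w ^ m := by
  rw [← dickson_one_one_eval_add_inv z w hzw, dickson_one_one_eq_chebyshev_C, hx]
  simpa [eval_comp] using congrArg (eval x) (C_comp_two_mul_X R m).symm

theorem sum_neg_one_pow_mul_choose_mul_pow_add_mul_pow_add {z w : R} (hzw : z * w = 1)
    {N : ℕ} (hN : N ≠ 0) (k : ℕ) :
    ∑ j ∈ range (N + 1), (-1) ^ j * (N.choose j : R) *
        ((z ^ (j + k) + w ^ (j + k)) * (z ^ (N - j + k) + w ^ (N - j + k)))
      = (w - z) ^ N + (z - w) ^ N := by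
  have hterm : ∀ j ∈ range (N + 1),
      (z ^ (j + k) + w ^ (j + k)) * (z ^ (N - j + k) + w ^ (N - j + k))
        = (z ^ (N + 2 * k) + w ^ (N + 2 * k)) + z ^ j * w ^ (N - j) + w ^ j * z ^ (N - j) := by
    intro j hj
    obtain ⟨i, rfl⟩ : ∃ i, N = j + i := ⟨N - j, by have := mem_range.1 hj; omega⟩
    have hk : (z * w) ^ k = 1 := by rw [hzw, one_pow]
    simp only [Nat.add_sub_cancel_left]
    linear_combination (z ^ j * w ^ i + w ^ j * z ^ i) * hk
  have halt : ∑ j ∈ range (N + 1), (-1) ^ j * (N.choose j : R) = 0 := by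
    simpa using congrArg (Int.cast : ℤ → R) (Int.alternating_sum_range_choose_of_ne hN)
  rw [sum_congr rfl fun j hj => by rw [hterm j hj]]
  simp only [mul_add, sum_add_distrib, ← sum_mul, halt, zero_mul, zero_add, sub_eq_neg_add,
    add_pow]
  congr 1 <;> refine sum_congr rfl fun j _ => by rw [neg_pow]; ring

/-- `(2n)!` times the extended Turán expression `T_k^{(n)}`, so that it makes sense over any
commutative ring. -/
noncomputable def turan (R : Type*) [CommRing R] (n k : ℕ) : R[X] :=
  ∑ j ∈ range (2 * n + 1), (-1) ^ (n + j) * ((2 * n).choose j : R[X]) * T R (j + k) *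
    T R (2 * n + k - j : ℕ)

theorem map_turan {S : Type*} [CommRing S] (f : R →+* S) (n k : ℕ) :
    map f (turan R n k) = turan S n k := by
  simp [turan, Polynomial.map_sum, map_T]

theorem eval_turan (x : R) (n k : ℕ) :
    (turan R n k).eval x = ∑ j ∈ range (2 * n + 1), (-1) ^ (n + j) * ((2 * n).choose j : R) *
      (T R (j + k)).eval x * (T R (2 * n + k - j : ℕ)).eval x := by
  simp [turan, eval_finsetSum]

theorem four_mul_eval_turan_of_mul_eq_one {z w x : R} (hzw : z * w = 1)
    (hx : z + w = 2 * x) {n : ℕ} (hn : n ≠ 0) (k : ℕ) :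
    4 * (turan R n k).eval x = 4 * (2 ^ (2 * n - 1) * (1 - x ^ 2) ^ n) := by
  have hT := two_mul_eval_T_of_mul_eq_one hzw hx
  have hterm : ∀ j ∈ range (2 * n + 1),
      4 * ((-1) ^ (n + j) * ((2 * n).choose j : R) *
        (T R (j + k)).eval x * (T R (2 * n + k - j : ℕ)).eval x)
      = (-1) ^ n * ((-1) ^ j * ((2 * n).choose j : R) *
        ((z ^ (j + k) + w ^ (j + k)) * (z ^ (2 * n - j + k) + w ^ (2 * n - j + k)))) := by
    intro j hj
    rw [show 2 * n + k - j = 2 * n - j + k by have := mem_range.1 hj; omega,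
      ← hT, ← hT, pow_add]
    push_cast
    ring
  have hsq : (z - w) ^ 2 = 4 * (x ^ 2 - 1) := by
    linear_combination (z + w + 2 * x) * hx - 4 * hzw
  have hsq' : (w - z) ^ 2 = 4 * (x ^ 2 - 1) := by rw [← hsq]; ring
  have hsign : (-1) ^ n * (4 * (x ^ 2 - 1)) ^ n = 2 ^ (2 * n) * (1 - x ^ 2) ^ n := by
    rw [← mul_pow, pow_mul, ← mul_pow]; ring_nf
  obtain ⟨m, rfl⟩ := Nat.exists_eq_add_one_of_ne_zero hn
  rw [eval_turan, mul_sum, sum_congr rfl hterm, ← mul_sum,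
    sum_neg_one_pow_mul_choose_mul_pow_add_mul_pow_add hzw (by omega), pow_mul, pow_mul, hsq,
    hsq', ← two_mul, mul_left_comm, hsign, show 2 * (m + 1) - 1 = 2 * m + 1 by omega]
  ring

variable (R) in
theorem turan_eq {n : ℕ} (hn : n ≠ 0) (k : ℕ) :
    turan R n k = 2 ^ (2 * n - 1) * (1 - X ^ 2) ^ n := by
  have hℂ : turan ℂ n k = 2 ^ (2 * n - 1) * (1 - X ^ 2) ^ n := by
    refine Polynomial.funext fun x => ?_
    obtain ⟨c, hc⟩ := IsAlgClosed.exists_pow_nat_eq (x ^ 2 - 1) two_pos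
    have h4 := four_mul_eval_turan_of_mul_eq_one (z := x + c) (w := x - c)
      (by linear_combination -hc) (by ring) hn k
    simpa using mul_left_cancel₀ (by norm_num) h4
  have hℤ : turan ℤ n k = 2 ^ (2 * n - 1) * (1 - X ^ 2) ^ n :=
    map_injective _ (Int.castRingHom ℂ).injective_int <| by simpa [map_turan] using hℂ
  simpa [map_turan] using congrArg (map (Int.castRingHom R)) hℤ

end Polynomial.Chebyshev

theorem stmt_15 (n k : ℕ) (hn : 1 ≤ n) (x : ℝ) :
    ∑ j ∈ Finset.range (2 * n + 1),
        ((-1 : ℝ) ^ (n + j) / (2 * n).factorial) * (2 * n).choose j *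
          eval x (T ℝ (j + k)) * eval x (T ℝ (2 * n + k - j : ℕ))
      = (2 ^ (2 * n - 1) / (2 * n).factorial) * (1 - x ^ 2) ^ n := by
  have h := congrArg (eval x) (turan_eq ℝ (n := n) (by omega) k)
  rw [eval_turan] at h
  simp only [eval_mul, eval_pow, eval_sub, eval_one, eval_X, eval_ofNat] at h
  rw [div_mul_eq_mul_div, ← h, sum_div]
  exact sum_congr rfl fun j _ => by ring
end

section
/- Let U_k denote the Chebyshev polynomials of the second kind and define the extended Turán expression T_k^{(n)}(x) = Σ_{j=0}^{2n} ((−1)^{n+j}/(2n)!)·C(2n, j)·U_{j+k}(x)·U_{2n+k−j}(x). Then for all n ≥ 1 and k ∈ ℕ, T_k^{(n)}(x) = (2^{2n−1}/(2n)!)·(1 − x²)^{n−1}. -/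
/-!
Since `2(1 - x²) U_a U_b = T_{a-b} - T_{a+b+2}` and `a + b = 2n + 2k` is fixed along the sum,
`2(1 - x²)` times the sum is an alternating binomial sum of `m ↦ T_m - T_{2n+2k+2}` at
`m = 2j - 2n`, i.e. a `2n`-th forward difference with step `2`; the constant is annihilated.
From `T_{m+2} + T_{m-2} = 2 T_2 T_m` one gets `Δ₂² T_m = -4(1 - x²) T_{m+2}`, so the
difference is `(-4(1 - x²))ⁿ T_0`, and cancelling `2(1 - x²)` gives the closed form.
-/

open Polynomial Polynomial.Chebyshev fwdDiff

section fwdDiff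

variable {M G : Type*} [AddCommMonoid M] [AddCommGroup G] (h : M)

theorem fwdDiff_iter_add_const (f : M → G) (g : G) {n : ℕ} (hn : n ≠ 0) :
    (Δ_[h])^[n] (fun y ↦ f y + g) = (Δ_[h])^[n] f := by
  obtain ⟨n, rfl⟩ := Nat.exists_eq_succ_of_ne_zero hn
  have : Δ_[h] (fun y ↦ f y + g) = Δ_[h] f := funext fun _ ↦ add_sub_add_right_eq_sub ..
  rw [Function.iterate_succ_apply, Function.iterate_succ_apply, this]

theorem fwdDiff_iter_two_mul_eq_pow_smul {R : Type*} [Monoid R] [DistribMulAction R G]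
    {f : M → G} {c : R} (hf : (Δ_[h])^[2] f = c • fun y ↦ f (y + h)) (n : ℕ) (y : M) :
    (Δ_[h])^[2 * n] f y = c ^ n • f (y + n • h) := by
  induction n generalizing y with
  | zero => simp
  | succ n ih =>
    rw [mul_add, mul_one, Function.iterate_add_apply, hf, fwdDiff_iter_const_smul, Pi.smul_apply,
      fwdDiff_iter_comp_add, ih, smul_smul, ← pow_succ', add_assoc, ← succ_nsmul']

end fwdDiff

namespace Polynomial.Chebyshev

variable (R : Type*) [CommRing R]

theorem T_sub_T_add_two (m : ℤ) : T R m - T R (m + 2) = 2 * (1 - X ^ 2) * U R m := by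
  linear_combination (norm := ring_nf) T_add_two R m - 2 * one_sub_X_sq_mul_U_eq_pol_in_T R m

theorem two_mul_one_sub_X_sq_mul_U_mul_U (a b : ℤ) :
    2 * (1 - X ^ 2) * U R a * U R b = T R (a - b) - T R (a + b + 2) := by
  induction b using Polynomial.Chebyshev.induct with
  | zero => simpa using (T_sub_T_add_two R a).symm
  | one =>
    linear_combination (norm := ring_nf) -(2 * X : R[X]) * T_sub_T_add_two R a
      + 2 * (1 - X ^ 2) * U R a * U_one R - T_add_one R a + T_add_one R (a + 2)
  | add_two b ih1 ih2 =>
    linear_combination (norm := ring_nf) 2 * (1 - X ^ 2) * U R a * U_add_two R b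
      + 2 * (X : R[X]) * ih1 - ih2 - T_sub_two R (a - b) + T_add_two R (a + b + 2)
  | neg_add_one b ih1 ih2 =>
    linear_combination (norm := ring_nf) 2 * (1 - X ^ 2) * U R a * U_add_two R (-b - 1)
      + 2 * (X : R[X]) * ih1 - ih2 - T_sub_two R (a + b + 1) + T_add_two R (a - b + 1)

theorem fwdDiff_iter_two_T :
    (Δ_[2])^[2] (fun m : ℤ ↦ T R m) = (-4 * (1 - X ^ 2) : R[X]) • fun m ↦ T R (m + 2) := by
  funext y
  simp only [Function.iterate_succ, Function.iterate_zero, Function.comp_apply, id, fwdDiff,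
    Pi.smul_apply, smul_eq_mul]
  linear_combination (norm := ring_nf) -T_mul_T R (y + 2) 2 + 2 * T R (y + 2) * T_two R

/-- `(2n)!` times the extended Turán expression `T_k^{(n)}`, with the indices read in `ℤ`. -/
noncomputable def turanSum (n k : ℕ) : R[X] :=
  ∑ j ∈ Finset.range (2 * n + 1),
    (-1) ^ (n + j) * ((2 * n).choose j : R[X]) * U R (j + k) * U R (2 * n + k - j)

theorem two_mul_one_sub_X_sq_mul_turanSum {n : ℕ} (hn : n ≠ 0) (k : ℕ) :
    2 * (1 - X ^ 2) * turanSum R n k = 4 ^ n * (1 - X ^ 2) ^ n := by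
  set g : ℤ → R[X] := fun m ↦ T R m + -T R (2 * n + 2 * k + 2)
  have hterm : ∀ j ∈ Finset.range (2 * n + 1),
      2 * (1 - X ^ 2) *
          ((-1) ^ (n + j) * ((2 * n).choose j : R[X]) * U R (j + k) * U R (2 * n + k - j))
        = (-1) ^ n * (((-1 : ℤ) ^ (2 * n - j) * (2 * n).choose j) • g (-(2 * n) + j • 2)) := by
    intro j hj
    have hsign : (-1 : R[X]) ^ (n + j) = (-1) ^ n * (-1) ^ (2 * n - j) := by
      rw [← pow_add]
      refine neg_one_pow_congr ?_
      have := Finset.mem_range.mp hj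
      rw [Nat.even_add, Nat.even_add, Nat.even_sub (by omega)]
      simp [parity_simps]
    rw [hsign, zsmul_eq_mul]
    have hprod := two_mul_one_sub_X_sq_mul_U_mul_U R (j + k) (2 * n + k - j)
    simp only [g]
    push_cast
    linear_combination (norm := ring_nf)
      (-1 : R[X]) ^ n * (-1) ^ (2 * n - j) * (2 * n).choose j * hprod
  rw [turanSum, Finset.mul_sum, Finset.sum_congr rfl hterm, ← Finset.mul_sum,
    ← fwdDiff_iter_eq_sum_shift, fwdDiff_iter_add_const _ _ _ (by omega),
    fwdDiff_iter_two_mul_eq_pow_smul _ (fwdDiff_iter_two_T R),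
    show -(2 * n : ℤ) + n • 2 = 0 by simp; ring, T_zero, smul_eq_mul, mul_one, ← mul_pow,
    ← mul_pow]
  ring

theorem turanSum_eq [IsDomain R] [NeZero (2 : R)] {n : ℕ} (hn : n ≠ 0) (k : ℕ) :
    turanSum R n k = 2 ^ (2 * n - 1) * (1 - X ^ 2) ^ (n - 1) := by
  have hne : (2 * (1 - X ^ 2) : R[X]) ≠ 0 := fun h ↦
    two_ne_zero (α := R) (by simpa using congrArg (eval 0) h)
  apply mul_left_cancel₀ hne
  rw [two_mul_one_sub_X_sq_mul_turanSum R hn, show (4 : R[X]) = 2 ^ 2 by norm_num, ← pow_mul]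
  obtain ⟨m, rfl⟩ : ∃ m, n = m + 1 := ⟨n - 1, by omega⟩
  rw [show 2 * (m + 1) - 1 = 2 * m + 1 by omega, Nat.add_sub_cancel]
  ring

end Polynomial.Chebyshev

theorem stmt_16 (n k : ℕ) (hn : 1 ≤ n) (x : ℝ) :
    ∑ j ∈ Finset.range (2 * n + 1),
        ((-1 : ℝ) ^ (n + j) / (2 * n).factorial) * (2 * n).choose j *
          eval x (U ℝ (j + k)) * eval x (U ℝ (2 * n + k - j : ℕ))
      = (2 ^ (2 * n - 1) / (2 * n).factorial) * (1 - x ^ 2) ^ (n - 1) := by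
  have hpoly := congrArg (eval x) (turanSum_eq ℝ (n := n) (by omega) k)
  simp only [turanSum, eval_finsetSum, eval_mul, eval_pow, eval_neg, eval_one, eval_sub,
    eval_X, eval_natCast, eval_ofNat] at hpoly
  rw [div_mul_eq_mul_div, ← hpoly, Finset.sum_div]
  refine Finset.sum_congr rfl fun j hj ↦ ?_
  have hle : j ≤ 2 * n + k := by have := Finset.mem_range.mp hj; omega
  rw [Nat.cast_sub hle]
  push_cast
  ring
end

section
/- Let f be a real polynomial with only simple real zeros r_1 > r_2 > ... > r_k, all non-positive, and let g be a real polynomial of degree k−1 whose simple real zeros s_1 > ... > s_{k−1} satisfy r_k < s_{k−1} < r_{k−1} < ... < s_1 ≤ r_1 ≤ 0 with s_j ≤ r_j for all j. Then for every complex x₀ with Re x₀ > 0, f'(x₀)/f(x₀) − g'(x₀)/g(x₀) ≠ 0. -/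
/-! The identity `f'/f = ∑ⱼ 1/(x - rⱼ)` turns the claim into the non-vanishing of
`S = ∑ⱼ 1/(x - rⱼ) - ∑ⱼ 1/(x - sⱼ)`. For `Re x > 0` the real number `Re (x / (x - t))` is positive
and nondecreasing in `t ≤ 0`, so pairing `rⱼ` with `sⱼ ≤ rⱼ` and keeping the unpaired `r_k` gives
`Re (x S) > 0`. -/

open Polynomial

theorem eval_derivative_div_eval_C_mul_prod_X_sub_C {K ι : Type*} [Field K] {a : K} (ha : a ≠ 0)
    (s : Finset ι) (r : ι → K) {x : K} (hx : ∀ i ∈ s, x ≠ r i) :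
    (C a * ∏ i ∈ s, (X - C (r i))).derivative.eval x / (C a * ∏ i ∈ s, (X - C (r i))).eval x =
      ∑ i ∈ s, 1 / (x - r i) := by
  have hsplits : (C a * ∏ i ∈ s, (X - C (r i))).Splits :=
    (Splits.prod fun i _ ↦ Splits.X_sub_C (r i)).C_mul a
  have hroots : (C a * ∏ i ∈ s, (X - C (r i))).roots = s.val.map r := by
    rw [roots_C_mul _ ha, roots_prod _ _ (Finset.prod_ne_zero_iff.mpr fun i _ ↦ X_sub_C_ne_zero _)]
    simp only [roots_X_sub_C, Multiset.bind_singleton]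
  have heval : (C a * ∏ i ∈ s, (X - C (r i))).eval x ≠ 0 := by
    simpa [eval_prod, ha, Finset.prod_eq_zero_iff, sub_eq_zero] using hx
  rw [hsplits.eval_derivative_div_eval_of_ne_zero heval, hroots, Multiset.map_map]
  rfl

theorem aeval_derivative_div_aeval_C_mul_prod_X_sub_C {ι : Type*} {a : ℝ} (ha : a ≠ 0)
    (s : Finset ι) (r : ι → ℝ) {z : ℂ} (hz : ∀ i ∈ s, z ≠ r i) :
    aeval z (derivative (C a * ∏ i ∈ s, (X - C (r i)))) /
        aeval z (C a * ∏ i ∈ s, (X - C (r i))) = ∑ i ∈ s, 1 / (z - r i) := by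
  rw [← eval_map_algebraMap, ← eval_map_algebraMap, ← derivative_map]
  simp only [Polynomial.map_mul, map_C, Polynomial.map_prod, Polynomial.map_sub, map_X]
  exact eval_derivative_div_eval_C_mul_prod_X_sub_C (by simpa using ha) s _ hz

theorem antitoneOn_mul_add_sq_div_sq_add_sq {a : ℝ} (ha : 0 < a) (b : ℝ) :
    AntitoneOn (fun u : ℝ ↦ (a * u + b ^ 2) / (u ^ 2 + b ^ 2)) (Set.Ici a) := by
  intro u (hu : a ≤ u) v _ huv
  rw [div_le_div_iff₀ (by nlinarith) (by nlinarith)]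
  -- the difference of the two sides is `(v - u) * (a u v + b² (u + v - a))`
  nlinarith [mul_nonneg (sub_nonneg.mpr huv) (mul_nonneg (mul_nonneg ha.le (ha.le.trans hu))
      (ha.le.trans (hu.trans huv))),
    mul_nonneg (sub_nonneg.mpr huv) (mul_nonneg (sq_nonneg b) (by linarith : (0 : ℝ) ≤ u + v - a))]

namespace Complex

theorem re_div_sub_ofReal (z : ℂ) (t : ℝ) :
    (z / (z - t)).re = (z.re * (z.re - t) + z.im ^ 2) / ((z.re - t) ^ 2 + z.im ^ 2) := by
  simp only [div_re, ← add_div, normSq_apply, sub_re, ofReal_re, sub_im, ofReal_im, sub_zero, sq]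

theorem re_div_sub_ofReal_pos {z : ℂ} (hz : 0 < z.re) {t : ℝ} (ht : t < z.re) :
    0 < (z / (z - t)).re := by
  rw [re_div_sub_ofReal]
  have := mul_pos hz (sub_pos.mpr ht)
  positivity

theorem monotoneOn_re_div_sub_ofReal {z : ℂ} (hz : 0 < z.re) :
    MonotoneOn (fun t : ℝ ↦ (z / (z - t)).re) (Set.Iic 0) := by
  intro s hs t ht hst
  simp only [re_div_sub_ofReal]
  exact antitoneOn_mul_add_sq_div_sq_add_sq hz z.im
    (by simpa using ht) (by simpa using hs) (by linarith)

theorem re_mul_sum_insert_sub_sum_pos {ι : Type*} [DecidableEq ι] {z : ℂ} (hz : 0 < z.re)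
    {t : Finset ι} {i : ι} (hi : i ∉ t) {r s : ι → ℝ} (hr : ∀ j ∈ insert i t, r j ≤ 0)
    (hs : ∀ j ∈ t, s j ≤ r j) :
    0 < (z * (∑ j ∈ insert i t, 1 / (z - r j) - ∑ j ∈ t, 1 / (z - s j))).re := by
  have hsplit : z * (∑ j ∈ insert i t, 1 / (z - r j) - ∑ j ∈ t, 1 / (z - s j)) =
      z / (z - r i) + ∑ j ∈ t, (z / (z - r j) - z / (z - s j)) := by
    simp only [Finset.sum_insert hi, Finset.sum_sub_distrib, Finset.mul_sum, mul_sub, mul_add,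
      mul_one_div]
    ring
  rw [hsplit, add_re, re_sum]
  refine add_pos_of_pos_of_nonneg (re_div_sub_ofReal_pos hz ?_) (Finset.sum_nonneg fun j hj ↦ ?_)
  · linarith [hr i (Finset.mem_insert_self i t)]
  · have hrj := hr j (Finset.mem_insert_of_mem hj)
    rw [sub_re, sub_nonneg]
    exact monotoneOn_re_div_sub_ofReal hz ((hs j hj).trans hrj) hrj (hs j hj)

end Complex

theorem stmt_18_general (k : ℕ) (hk : 1 ≤ k) (α β : ℝ) (hα : α ≠ 0) (hβ : β ≠ 0)
    (r s : ℕ → ℝ) (f g : ℝ[X])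
    (hf : f = C α * ∏ i ∈ Finset.Icc 1 k, (X - C (r i)))
    (hg : g = C β * ∏ i ∈ Finset.Icc 1 (k - 1), (X - C (s i)))
    -- r 1 > r 2 > ... > r k, all non-positive
    (hrnonpos : ∀ j, 1 ≤ j → j ≤ k → r j ≤ 0)
    (hs : ∀ j, 1 ≤ j → j ≤ k - 1 → s j ≤ r j) :
    ∀ x₀ : ℂ, 0 < x₀.re →
      aeval x₀ (derivative f) / aeval x₀ f - aeval x₀ (derivative g) / aeval x₀ g ≠ 0 := by
  intro x₀ hx₀
  have hne : ∀ t : ℝ, t ≤ 0 → x₀ ≠ t := fun t ht h ↦ by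
    rw [h, Complex.ofReal_re] at hx₀
    linarith
  have hr : ∀ j ∈ Finset.Icc 1 k, r j ≤ 0 := fun j hj ↦
    hrnonpos j (Finset.mem_Icc.mp hj).1 (Finset.mem_Icc.mp hj).2
  have hsr : ∀ j ∈ Finset.Icc 1 (k - 1), s j ≤ r j := fun j hj ↦
    hs j (Finset.mem_Icc.mp hj).1 (Finset.mem_Icc.mp hj).2
  have hkI : Finset.Icc 1 (k - 1) ⊆ Finset.Icc 1 k := Finset.Icc_subset_Icc_right (Nat.sub_le k 1)
  rw [hf, hg, aeval_derivative_div_aeval_C_mul_prod_X_sub_C hα _ r fun j hj ↦ hne _ (hr j hj),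
    aeval_derivative_div_aeval_C_mul_prod_X_sub_C hβ _ s fun j hj ↦
      hne _ ((hsr j hj).trans (hr j (hkI hj)))]
  rw [← Finset.insert_Icc_sub_one_right_eq_Icc hk] at hr ⊢
  intro hzero
  have hpos := Complex.re_mul_sum_insert_sub_sum_pos hx₀ (by simp; omega) hr hsr
  rw [hzero, mul_zero, Complex.zero_re] at hpos
  exact lt_irrefl 0 hpos

theorem stmt_18 (k : ℕ) (hk : 1 ≤ k) (α β : ℝ) (hα : α ≠ 0) (hβ : β ≠ 0)
    (r s : ℕ → ℝ) (f g : ℝ[X])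
    (hf : f = C α * ∏ i ∈ Finset.Icc 1 k, (X - C (r i)))
    (hg : g = C β * ∏ i ∈ Finset.Icc 1 (k - 1), (X - C (s i)))
    -- r 1 > r 2 > ... > r k, all non-positive
    (hrdec : ∀ j, 1 ≤ j → j + 1 ≤ k → r (j + 1) < r j)
    (hrnonpos : ∀ j, 1 ≤ j → j ≤ k → r j ≤ 0)
    -- interlacing: r k < s (k-1) < r (k-1) < ... < s 1 ≤ r 1
    (hlow : ∀ j, 1 ≤ j → j ≤ k - 1 → r (j + 1) < s j)
    (hhigh : ∀ j, 2 ≤ j → j ≤ k - 1 → s j < r j)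
    (hhigh1 : 1 ≤ k - 1 → s 1 ≤ r 1)
    (hs : ∀ j, 1 ≤ j → j ≤ k - 1 → s j ≤ r j) :
    ∀ x₀ : ℂ, 0 < x₀.re →
      aeval x₀ (derivative f) / aeval x₀ f - aeval x₀ (derivative g) / aeval x₀ g ≠ 0 :=
  stmt_18_general k hk α β hα hβ r s f g hf hg hrnonpos hs
end
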